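/- arXiv:math/9809128 — 10 statements merged into one kernel-verified Lean document; each statement's English description precedes it below -/
import Mathlib

section
/- Let Δ ∈ ℚ[x_1,…,x_n,y_1,…,y_n] be a nonzero polynomial that is bihomogeneous of degree a in the x-variables and degree b in the y-variables, and let M be the ℚ-linear span of Δ and all its partial derivatives of all orders. Then the map flip : P ↦ P(∂_{x_1},…,∂_{x_n},∂_{y_1},…,∂_{y_n})Δ is a ℚ-linear bijection of M onto M which maps the bihomogeneous component H_{h,k}(M) bijectively onto H_{a−h,b−k}(M); in particular dim_ℚ H_{h,k}(M) = dim_ℚ H_{a−h,b−k}(M) for all h, k. -/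
open MvPolynomial

/-- The linear span of a polynomial `Δ` together with all of its partial
derivatives of all orders. -/
noncomputable def derivSpan (n : ℕ) (Δ : MvPolynomial (Fin n ⊕ Fin n) ℚ) :
    Submodule ℚ (MvPolynomial (Fin n ⊕ Fin n) ℚ) :=
  Submodule.span ℚ
    {P | ∃ L : List (Fin n ⊕ Fin n), P = L.foldr (fun v Q => pderiv v Q) Δ}

/-- The differential operator `∂^d = ∏_v ∂_v^{d v}` (the factors commute, so the
order of the product is immaterial). -/
noncomputable def derivMonomial (n : ℕ) (d : (Fin n ⊕ Fin n) →₀ ℕ) :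
    Module.End ℚ (MvPolynomial (Fin n ⊕ Fin n) ℚ) :=
  (d.support.toList.map fun v =>
    ((pderiv v).toLinearMap : Module.End ℚ (MvPolynomial (Fin n ⊕ Fin n) ℚ)) ^ d v).prod

/-- `P(∂) Q`: the result of applying to `Q` the differential operator obtained
by substituting `∂_{x_i}` for `x_i` and `∂_{y_i}` for `y_i` in `P`. -/
noncomputable def applyDiff (n : ℕ)
    (P Q : MvPolynomial (Fin n ⊕ Fin n) ℚ) : MvPolynomial (Fin n ⊕ Fin n) ℚ :=
  ∑ d ∈ P.support, coeff d P • derivMonomial n d Q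

/-- Total degree in the `x`-variables of a monomial exponent vector. -/
def xdeg (n : ℕ) (d : (Fin n ⊕ Fin n) →₀ ℕ) : ℕ := ∑ i : Fin n, d (Sum.inl i)

/-- Total degree in the `y`-variables of a monomial exponent vector. -/
def ydeg (n : ℕ) (d : (Fin n ⊕ Fin n) →₀ ℕ) : ℕ := ∑ i : Fin n, d (Sum.inr i)

/-- The bihomogeneous component `H_{h,k}(W)`: elements of `W` which are
bihomogeneous of degree `h` in the `x`-variables and `k` in the `y`-variables
(indexed by integers; for negative `h` or `k` only `0` qualifies). -/
def biComponent (n : ℕ) (h k : ℤ) (W : Set (MvPolynomial (Fin n ⊕ Fin n) ℚ)) :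
    Set (MvPolynomial (Fin n ⊕ Fin n) ℚ) :=
  {P ∈ W | ∀ d, coeff d P ≠ 0 → (xdeg n d : ℤ) = h ∧ (ydeg n d : ℤ) = k}

/-!
Operators `P(∂)` commute, and the apolar pairing `⟨P, Q⟩ = (P(∂)Q)(0) = ∑_d d! p_d q_d` is
positive definite. If `P = R(∂)Δ ∈ M` and `P(∂)Δ = 0`, then `P(∂)P = R(∂)(P(∂)Δ) = 0`, so
`⟨P, P⟩ = 0` and `P = 0`: `flip` is injective on `M`. It maps `H_{h,k}(M)` into
`H_{a-h,b-k}(M)` and back, and `M` is finite-dimensional (its elements have degree at most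
`a + b`), so injectivity in both directions gives bijectivity and equal dimensions.
-/

theorem MvPolynomial.coeff_pderiv_pow {σ R : Type*} [CommSemiring R] (i : σ) (k : ℕ)
    (p : MvPolynomial σ R) (m : σ →₀ ℕ) :
    coeff m (((pderiv i).toLinearMap ^ k : Module.End R (MvPolynomial σ R)) p) =
      coeff (m + Finsupp.single i k) p * (m i + 1).ascFactorial k := by
  induction k generalizing p with
  | zero => simp
  | succ k ih =>
    rw [pow_succ, Module.End.mul_apply, ih, Derivation.coeFn_coe, coeff_pderiv,
      Finsupp.add_apply, Finsupp.single_eq_same, add_assoc, ← Finsupp.single_add,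
      Nat.ascFactorial_succ]
    push_cast
    ring

theorem MvPolynomial.coeff_list_prod_pderiv_pow {σ R : Type*} [CommSemiring R] (d : σ →₀ ℕ)
    (p : MvPolynomial σ R) {L : List σ} (hL : L.Nodup) (m : σ →₀ ℕ) :
    coeff m ((L.map fun i =>
        ((pderiv i).toLinearMap ^ d i : Module.End R (MvPolynomial σ R))).prod p) =
      coeff (m + (L.map fun i => Finsupp.single i (d i)).sum) p *
        (L.map fun i => (m i + 1).ascFactorial (d i)).prod := by
  induction L generalizing m with
  | nil => simp
  | cons i L ih =>
    obtain ⟨hi, hL⟩ := List.nodup_cons.mp hL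
    have hm : L.map (fun j => ((m + Finsupp.single i (d i)) j + 1).ascFactorial (d j)) =
        L.map fun j => (m j + 1).ascFactorial (d j) :=
      List.map_congr_left fun j hj => by
        rw [Finsupp.add_apply, Finsupp.single_eq_of_ne (ne_of_mem_of_not_mem hj hi), add_zero]
    rw [List.map_cons, List.prod_cons, Module.End.mul_apply, coeff_pderiv_pow, ih hL, hm]
    simp only [List.map_cons, List.sum_cons, List.prod_cons, add_assoc, Nat.cast_mul]
    ring

theorem Finsupp.prod_support_ascFactorial_add {σ : Type*} [DecidableEq σ] (m d d' : σ →₀ ℕ) :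
    ∏ v ∈ (d + d').support, (m v + 1).ascFactorial ((d + d') v) =
      (∏ v ∈ d.support, (m v + 1).ascFactorial (d v)) *
        ∏ v ∈ d'.support, ((m + d) v + 1).ascFactorial (d' v) := by
  have hs {f : σ →₀ ℕ} (hf : f.support ⊆ d.support ∪ d'.support) (g : σ → ℕ) :
      ∏ v ∈ f.support, (g v).ascFactorial (f v) =
        ∏ v ∈ d.support ∪ d'.support, (g v).ascFactorial (f v) :=
    Finset.prod_subset hf fun v _ hv => by
      rw [Finsupp.notMem_support_iff.mp hv, Nat.ascFactorial_zero]
  rw [hs Finsupp.support_add, hs Finset.subset_union_left, hs Finset.subset_union_right,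
    ← Finset.prod_mul_distrib]
  refine Finset.prod_congr rfl fun v _ => ?_
  rw [Finsupp.add_apply, Finsupp.add_apply, ← Nat.ascFactorial_mul_ascFactorial, add_right_comm]

section LinearAlgebra

open Module Set

variable {K V W : Type*} [DivisionRing K] [AddCommGroup V] [Module K V] [AddCommGroup W]
  [Module K W] {f : V →ₗ[K] W} {A : Submodule K V} {B : Submodule K W}

theorem LinearMap.finrank_le_of_mapsTo_of_injOn [FiniteDimensional K B] (h : MapsTo f A B)
    (hinj : InjOn f A) : finrank K A ≤ finrank K B :=
  finrank_le_finrank_of_injective (f := f.restrict h) (h.restrict_inj.mpr hinj)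

theorem LinearMap.bijOn_of_injOn_of_finrank_le [FiniteDimensional K A] [FiniteDimensional K B]
    (h : MapsTo f A B) (hinj : InjOn f A) (hle : finrank K B ≤ finrank K A) : BijOn f A B :=
  ⟨h, hinj, h.restrict_surjective_iff.mp <| (injective_iff_surjective_of_finrank_eq_finrank
    (f := f.restrict h) (le_antisymm (finrank_le_of_mapsTo_of_injOn h hinj) hle)).mp
    (h.restrict_inj.mpr hinj)⟩

end LinearAlgebra

noncomputable def flipMap (n : ℕ) (Δ : MvPolynomial (Fin n ⊕ Fin n) ℚ) :
    MvPolynomial (Fin n ⊕ Fin n) ℚ →ₗ[ℚ] MvPolynomial (Fin n ⊕ Fin n) ℚ :=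
  Finsupp.linearCombination ℚ (fun d => derivMonomial n d Δ) ∘ₗ
    (AddMonoidAlgebra.coeffLinearEquiv ℚ).toLinearMap

noncomputable def bihomogeneousSubmodule (n : ℕ) (h k : ℤ) :
    Submodule ℚ (MvPolynomial (Fin n ⊕ Fin n) ℚ) :=
  restrictSupport ℚ {d | (xdeg n d : ℤ) = h ∧ (ydeg n d : ℤ) = k}

section

variable {n : ℕ}

theorem coeff_derivMonomial (d m : (Fin n ⊕ Fin n) →₀ ℕ)
    (Q : MvPolynomial (Fin n ⊕ Fin n) ℚ) :
    coeff m (derivMonomial n d Q) =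
      coeff (m + d) Q * ∏ v ∈ d.support, (m v + 1).ascFactorial (d v) := by
  rw [derivMonomial, coeff_list_prod_pderiv_pow d Q d.support.nodup_toList,
    Finset.prod_map_toList, Finset.sum_map_toList]
  congr
  exact Finsupp.sum_single d

theorem derivMonomial_add (d d' : (Fin n ⊕ Fin n) →₀ ℕ) :
    derivMonomial n (d + d') = derivMonomial n d * derivMonomial n d' := by
  refine LinearMap.ext fun Q => MvPolynomial.ext _ _ fun m => ?_
  rw [Module.End.mul_apply, coeff_derivMonomial, coeff_derivMonomial, coeff_derivMonomial,
    Finsupp.prod_support_ascFactorial_add, add_assoc]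
  push_cast
  ring

theorem derivMonomial_zero : derivMonomial n 0 = 1 := by
  simp [derivMonomial]

theorem derivMonomial_single (v : Fin n ⊕ Fin n) :
    derivMonomial n (Finsupp.single v 1) = (pderiv v).toLinearMap := by
  simp [derivMonomial]

theorem foldr_pderiv_eq_derivMonomial (L : List (Fin n ⊕ Fin n))
    (Q : MvPolynomial (Fin n ⊕ Fin n) ℚ) :
    L.foldr (fun v Q => pderiv v Q) Q = derivMonomial n (Multiset.toFinsupp L) Q := by
  induction L with
  | nil => simp [derivMonomial_zero]
  | cons v L ih =>
    rw [List.foldr_cons, ih, ← Multiset.cons_coe, ← Multiset.singleton_add, map_add,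
      Multiset.toFinsupp_singleton, derivMonomial_add, derivMonomial_single, Module.End.mul_apply,
      Derivation.coeFn_coe]

theorem derivSpan_eq_span_range (Δ : MvPolynomial (Fin n ⊕ Fin n) ℚ) :
    derivSpan n Δ = Submodule.span ℚ (Set.range fun d => derivMonomial n d Δ) := by
  rw [derivSpan]
  congr 1
  ext P
  constructor
  · rintro ⟨L, rfl⟩
    exact ⟨_, (foldr_pderiv_eq_derivMonomial L Δ).symm⟩
  · rintro ⟨d, rfl⟩
    obtain ⟨L, hL⟩ := Quotient.exists_rep (Multiset.toFinsupp.symm d)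
    refine ⟨L, ?_⟩
    rw [foldr_pderiv_eq_derivMonomial, show (L : Multiset _) = Multiset.toFinsupp.symm d from hL,
      AddEquiv.apply_symm_apply]

theorem flipMap_apply (Δ P : MvPolynomial (Fin n ⊕ Fin n) ℚ) :
    flipMap n Δ P = applyDiff n P Δ := by
  simp [flipMap, applyDiff, Finsupp.linearCombination_apply, sum_def]

theorem range_flipMap (Δ : MvPolynomial (Fin n ⊕ Fin n) ℚ) :
    LinearMap.range (flipMap n Δ) = derivSpan n Δ := by
  rw [flipMap, LinearMap.range_comp_of_range_eq_top _ (LinearEquiv.range _),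
    Finsupp.range_linearCombination, derivSpan_eq_span_range]

theorem applyDiff_comm (P R Q : MvPolynomial (Fin n ⊕ Fin n) ℚ) :
    applyDiff n P (applyDiff n R Q) = applyDiff n R (applyDiff n P Q) := by
  simp only [applyDiff, map_sum, map_smul, Finset.smul_sum]
  rw [Finset.sum_comm]
  refine Finset.sum_congr rfl fun e _ => Finset.sum_congr rfl fun d _ => ?_
  rw [smul_comm, ← Module.End.mul_apply, ← Module.End.mul_apply, ← derivMonomial_add,
    ← derivMonomial_add, add_comm]

theorem applyDiff_zero_right (P : MvPolynomial (Fin n ⊕ Fin n) ℚ) : applyDiff n P 0 = 0 := by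
  simp [applyDiff]

theorem coeff_zero_applyDiff (P Q : MvPolynomial (Fin n ⊕ Fin n) ℚ) :
    coeff 0 (applyDiff n P Q) =
      ∑ d ∈ P.support, coeff d P * coeff d Q * ∏ v ∈ d.support, (d v).factorial := by
  rw [applyDiff, coeff_sum]
  refine Finset.sum_congr rfl fun d _ => ?_
  simp [coeff_derivMonomial, Nat.one_ascFactorial, mul_assoc]

theorem eq_zero_of_coeff_zero_applyDiff_self {P : MvPolynomial (Fin n ⊕ Fin n) ℚ}
    (h : coeff 0 (applyDiff n P P) = 0) : P = 0 := by
  rw [coeff_zero_applyDiff, Finset.sum_eq_zero_iff_of_nonneg fun d _ =>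
    mul_nonneg (mul_self_nonneg _) (by positivity)] at h
  ext d
  by_contra hd
  have hpos : 0 < coeff d P * coeff d P * ∏ v ∈ d.support, ((d v).factorial : ℚ) :=
    mul_pos (mul_self_pos.mpr hd) (by positivity)
  exact hpos.ne' (by exact_mod_cast h d (mem_support_iff.mpr hd))

theorem disjoint_derivSpan_ker_flipMap (Δ : MvPolynomial (Fin n ⊕ Fin n) ℚ) :
    Disjoint (derivSpan n Δ) (LinearMap.ker (flipMap n Δ)) := by
  rw [Submodule.disjoint_def, ← range_flipMap]
  rintro _ ⟨R, rfl⟩ hker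
  simp only [LinearMap.mem_ker, flipMap_apply] at hker ⊢
  apply eq_zero_of_coeff_zero_applyDiff_self
  rw [applyDiff_comm, hker, applyDiff_zero_right, coeff_zero]

theorem mem_bihomogeneousSubmodule {h k : ℤ} {P : MvPolynomial (Fin n ⊕ Fin n) ℚ} :
    P ∈ bihomogeneousSubmodule n h k ↔
      ∀ d, coeff d P ≠ 0 → (xdeg n d : ℤ) = h ∧ (ydeg n d : ℤ) = k := by
  simp [bihomogeneousSubmodule, mem_restrictSupport_iff, Set.subset_def]

theorem biComponent_eq_inf (h k : ℤ) (W : Submodule ℚ (MvPolynomial (Fin n ⊕ Fin n) ℚ)) :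
    biComponent n h k W = ↑(W ⊓ bihomogeneousSubmodule n h k) := by
  ext P
  simp [biComponent, mem_bihomogeneousSubmodule]

theorem finrank_biComponent (h k : ℤ) (W : Submodule ℚ (MvPolynomial (Fin n ⊕ Fin n) ℚ)) :
    Set.finrank ℚ (biComponent n h k W) =
      Module.finrank ℚ ↥(W ⊓ bihomogeneousSubmodule n h k) := by
  rw [biComponent_eq_inf, Set.finrank, Submodule.span_eq]

theorem xdeg_add (d e : (Fin n ⊕ Fin n) →₀ ℕ) : xdeg n (d + e) = xdeg n d + xdeg n e := by
  simp [xdeg, Finset.sum_add_distrib]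

theorem ydeg_add (d e : (Fin n ⊕ Fin n) →₀ ℕ) : ydeg n (d + e) = ydeg n d + ydeg n e := by
  simp [ydeg, Finset.sum_add_distrib]

theorem derivMonomial_mem_bihomogeneousSubmodule {h k : ℤ}
    {Q : MvPolynomial (Fin n ⊕ Fin n) ℚ} (hQ : Q ∈ bihomogeneousSubmodule n h k)
    (d : (Fin n ⊕ Fin n) →₀ ℕ) :
    derivMonomial n d Q ∈ bihomogeneousSubmodule n (h - xdeg n d) (k - ydeg n d) := by
  rw [mem_bihomogeneousSubmodule] at hQ ⊢
  intro m hm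
  rw [coeff_derivMonomial] at hm
  obtain ⟨hx, hy⟩ := hQ _ (left_ne_zero_of_mul hm)
  rw [xdeg_add, Nat.cast_add] at hx
  rw [ydeg_add, Nat.cast_add] at hy
  omega

theorem applyDiff_mem_bihomogeneousSubmodule {h k h' k' : ℤ}
    {P Q : MvPolynomial (Fin n ⊕ Fin n) ℚ} (hP : P ∈ bihomogeneousSubmodule n h' k')
    (hQ : Q ∈ bihomogeneousSubmodule n h k) :
    applyDiff n P Q ∈ bihomogeneousSubmodule n (h - h') (k - k') := by
  refine Submodule.sum_mem _ fun d hd => Submodule.smul_mem _ _ ?_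
  obtain ⟨hx, hy⟩ := mem_bihomogeneousSubmodule.mp hP d (mem_support_iff.mp hd)
  rw [← hx, ← hy]
  exact derivMonomial_mem_bihomogeneousSubmodule hQ d

theorem bihomogeneousSubmodule_le_restrictTotalDegree {h k : ℤ} {N : ℕ} (hN : h + k ≤ N) :
    bihomogeneousSubmodule n h k ≤ restrictTotalDegree (Fin n ⊕ Fin n) ℚ N := by
  refine restrictSupport_mono ℚ fun d ⟨hx, hy⟩ => ?_
  have : (d.sum fun _ e => e) = xdeg n d + ydeg n d := by
    rw [Finsupp.sum_fintype _ _ fun _ => rfl, Fintype.sum_sum_type, xdeg, ydeg]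
  change _ ≤ N
  omega

theorem finiteDimensional_derivSpan {a b : ℕ} {Δ : MvPolynomial (Fin n ⊕ Fin n) ℚ}
    (hΔ : Δ ∈ bihomogeneousSubmodule n a b) : FiniteDimensional ℚ (derivSpan n Δ) := by
  refine Submodule.finiteDimensional_of_le (S₂ := restrictTotalDegree _ ℚ (a + b)) ?_
  rw [derivSpan_eq_span_range, Submodule.span_le]
  rintro _ ⟨d, rfl⟩
  exact bihomogeneousSubmodule_le_restrictTotalDegree (by push_cast; omega)
    (derivMonomial_mem_bihomogeneousSubmodule hΔ d)

end

theorem statement4_general (n a b : ℕ) (Δ : MvPolynomial (Fin n ⊕ Fin n) ℚ)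
    (hbih : ∀ d, coeff d Δ ≠ 0 → xdeg n d = a ∧ ydeg n d = b) :
    (∀ P Q, applyDiff n (P + Q) Δ = applyDiff n P Δ + applyDiff n Q Δ) ∧
    (∀ (c : ℚ) (P : MvPolynomial (Fin n ⊕ Fin n) ℚ),
      applyDiff n (c • P) Δ = c • applyDiff n P Δ) ∧
    Set.BijOn (fun P => applyDiff n P Δ)
      ↑(derivSpan n Δ) ↑(derivSpan n Δ) ∧
    (∀ h k : ℤ, Set.BijOn (fun P => applyDiff n P Δ)
        (biComponent n h k ↑(derivSpan n Δ))
        (biComponent n ((a : ℤ) - h) ((b : ℤ) - k) ↑(derivSpan n Δ))) ∧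
    (∀ h k : ℤ,
      Set.finrank ℚ (biComponent n h k ↑(derivSpan n Δ)) =
        Set.finrank ℚ
          (biComponent n ((a : ℤ) - h) ((b : ℤ) - k) ↑(derivSpan n Δ))) := by
  have hΔ : Δ ∈ bihomogeneousSubmodule n a b :=
    mem_bihomogeneousSubmodule.mpr fun d hd => by simpa using hbih d hd
  have := finiteDimensional_derivSpan hΔ
  set M := derivSpan n Δ
  have hmaps : Set.MapsTo (flipMap n Δ) M M := fun P _ =>
    (range_flipMap Δ).le (LinearMap.mem_range_self _ P)
  have hinj : Set.InjOn (flipMap n Δ) M :=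
    LinearMap.injOn_of_disjoint_ker le_rfl (disjoint_derivSpan_ker_flipMap Δ)
  have hmapsComp (h k : ℤ) : Set.MapsTo (flipMap n Δ) ↑(M ⊓ bihomogeneousSubmodule n h k)
      ↑(M ⊓ bihomogeneousSubmodule n (a - h) (b - k)) := fun P hP =>
    ⟨hmaps hP.1, (flipMap_apply Δ P).symm ▸ applyDiff_mem_bihomogeneousSubmodule hP.2 hΔ⟩
  have hinjComp (h k : ℤ) : Set.InjOn (flipMap n Δ) ↑(M ⊓ bihomogeneousSubmodule n h k) :=
    hinj.mono inf_le_left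
  have hfinrank (h k : ℤ) : Module.finrank ℚ ↥(M ⊓ bihomogeneousSubmodule n h k) =
      Module.finrank ℚ ↥(M ⊓ bihomogeneousSubmodule n (a - h) (b - k)) := by
    have hback := hmapsComp (a - h) (b - k)
    rw [sub_sub_cancel, sub_sub_cancel] at hback
    exact le_antisymm (LinearMap.finrank_le_of_mapsTo_of_injOn (hmapsComp h k) (hinjComp h k))
      (LinearMap.finrank_le_of_mapsTo_of_injOn hback (hinjComp _ _))
  simp only [← flipMap_apply, finrank_biComponent]
  simp only [biComponent_eq_inf]
  exact ⟨map_add _, map_smul _, LinearMap.bijOn_of_injOn_of_finrank_le hmaps hinj le_rfl,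
    fun h k => LinearMap.bijOn_of_injOn_of_finrank_le (hmapsComp h k) (hinjComp h k)
      (hfinrank h k).ge, hfinrank⟩

/-- Let `Δ ≠ 0` be bihomogeneous of bidegree `(a,b)` and let `M` be the span
of `Δ` and all its partial derivatives.  Then `flip : P ↦ P(∂)Δ` is a ℚ-linear
bijection of `M` onto `M` which maps each bihomogeneous component
`H_{h,k}(M)` bijectively onto `H_{a-h,b-k}(M)`; in particular those two
components have the same dimension, for all `h, k`. -/
theorem statement4 (n a b : ℕ) (Δ : MvPolynomial (Fin n ⊕ Fin n) ℚ)
    (hΔ : Δ ≠ 0)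
    (hbih : ∀ d, coeff d Δ ≠ 0 → xdeg n d = a ∧ ydeg n d = b) :
    (∀ P Q, applyDiff n (P + Q) Δ = applyDiff n P Δ + applyDiff n Q Δ) ∧
    (∀ (c : ℚ) (P : MvPolynomial (Fin n ⊕ Fin n) ℚ),
      applyDiff n (c • P) Δ = c • applyDiff n P Δ) ∧
    Set.BijOn (fun P => applyDiff n P Δ)
      ↑(derivSpan n Δ) ↑(derivSpan n Δ) ∧
    (∀ h k : ℤ, Set.BijOn (fun P => applyDiff n P Δ)
        (biComponent n h k ↑(derivSpan n Δ))
        (biComponent n ((a : ℤ) - h) ((b : ℤ) - k) ↑(derivSpan n Δ))) ∧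
    (∀ h k : ℤ,
      Set.finrank ℚ (biComponent n h k ↑(derivSpan n Δ)) =
        Set.finrank ℚ
          (biComponent n ((a : ℤ) - h) ((b : ℤ) - k) ↑(derivSpan n Δ))) :=
  statement4_general n a b Δ hbih
end

section
/- Let K be a field, σ an involutive field automorphism of K (σ∘σ = id), V a K-vector space, and D : V → V an additive σ-semilinear map (D(c·v) = σ(c)·D(v) for c ∈ K, v ∈ V) with D∘D = id_V. Let T_1,…,T_m be nonzero elements of K with σ(T_i) = T_i^{-1} for every i. Let Φ : {0,1}^m → V satisfy: for every word ε ∈ {0,1}^m and every index i with ε_i = 1, Φ(τ_i ε) = T_i·D(Φ(ε)), where τ_i ε is the word obtained from ε by complementing every letter except the i-th. Then whenever two words ε, η ∈ {0,1}^m have the same number of letters equal to 1, one has (∏_{i : ε_i = 0} T_i)·Φ(ε) = (∏_{i : η_i = 0} T_i)·Φ(η); equivalently, for each 0 ≤ k ≤ m there is an element Φ⁽ᵏ⁾ ∈ V such that Φ(ε) = (∏_{i : ε_i = 0} T_i)^{-1}·Φ⁽ᵏ⁾ for every ε with exactly k letters equal to 1. -/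
/-- Abstract form of the "Science Fiction" flip symmetry (Proposition 3.1 of
Bergeron–Garsia): given an involutive semilinear map `D`, scalars `T i` with
`σ (T i) = (T i)⁻¹`, and a family `Φ` indexed by words in `{0,1}^m` satisfying
`Φ (τ_i ε) = T i • D (Φ ε)` whenever `ε_i = 1`, the vector
`(∏_{ε_i = 0} T i) • Φ ε` depends only on the weight of `ε`; equivalently, for
each `0 ≤ k ≤ m` there is `Φ⁽ᵏ⁾` with `Φ ε = (∏_{ε_i = 0} T i)⁻¹ • Φ⁽ᵏ⁾` for
every word `ε` of weight `k`. -/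
theorem statement5 {K : Type*} [Field K] {V : Type*} [AddCommGroup V] [Module K V]
    (σ : K →+* K) (hσ : ∀ c, σ (σ c) = c)
    (D : V → V)
    (Dadd : ∀ u v, D (u + v) = D u + D v)
    (Dsmul : ∀ (c : K) (v : V), D (c • v) = σ c • D v)
    (DD : ∀ v, D (D v) = v)
    (m : ℕ) (T : Fin m → K) (hT0 : ∀ i, T i ≠ 0)
    (hTσ : ∀ i, σ (T i) = (T i)⁻¹)
    (Φ : (Fin m → Bool) → V)
    (hflip : ∀ (ε : Fin m → Bool) (i : Fin m), ε i = true →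
      Φ (fun j => if j = i then ε j else !ε j) = T i • D (Φ ε)) :
    (∀ ε η : Fin m → Bool,
      (Finset.univ.filter fun i => ε i = true).card =
        (Finset.univ.filter fun i => η i = true).card →
      (∏ i ∈ Finset.univ.filter fun i => ε i = false, T i) • Φ ε =
        (∏ i ∈ Finset.univ.filter fun i => η i = false, T i) • Φ η) ∧
    (∀ k : ℕ, k ≤ m → ∃ Φk : V, ∀ ε : Fin m → Bool,
      (Finset.univ.filter fun i => ε i = true).card = k →
      Φ ε = (∏ i ∈ Finset.univ.filter fun i => ε i = false, T i)⁻¹ • Φk) := by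
  classical
  set P : (Fin m → Bool) → K :=
    fun ε => ∏ i ∈ Finset.univ.filter fun i => ε i = false, T i with hP
  -- Key step: swapping a `true` at `i` with a `false` at `j` preserves `P ε • Φ ε`.
  have key : ∀ (ε : Fin m → Bool) (i j : Fin m), i ≠ j → ε i = true → ε j = false →
      P ε • Φ ε = P (fun k => if k = i then false else if k = j then true else ε k) •
        Φ (fun k => if k = i then false else if k = j then true else ε k) := by
    intro ε i j hij hi hj
    set ε' : Fin m → Bool := fun k => if k = i then false else if k = j then true else ε k
      with hε'
    have h1 := hflip ε i hi
    set ε₁ : Fin m → Bool := fun k => if k = i then ε k else !ε k with hε₁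
    have hε₁j : ε₁ j = true := by simp [hε₁, Ne.symm hij, hj]
    have h2 := hflip ε₁ j hε₁j
    have he : (fun k => if k = j then ε₁ k else !ε₁ k) = ε' := by
      funext k
      by_cases hk : k = j
      · subst hk; simp [hε', hε₁, Ne.symm hij, hj]
      · by_cases hki : k = i
        · subst hki; simp [hε', hε₁, hk, hi]
        · simp [hε', hε₁, hk, hki]
    rw [he] at h2
    have hΦ : Φ ε' = (T j * (T i)⁻¹) • Φ ε := by
      rw [h2, h1, Dsmul, DD, hTσ, smul_smul]
    have hjS : j ∈ Finset.univ.filter fun k => ε k = false := by simp [hj]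
    have hfil : (Finset.univ.filter fun k => ε' k = false)
        = insert i ((Finset.univ.filter fun k => ε k = false).erase j) := by
      ext k
      simp only [Finset.mem_insert, Finset.mem_erase, Finset.mem_filter, Finset.mem_univ,
        true_and]
      by_cases hk : k = i
      · subst hk; simp [hε']
      · by_cases hkj : k = j
        · subst hkj; simp [hε', Ne.symm hij, hk]
        · simp [hε', hk, hkj]
    have hiS : i ∉ (Finset.univ.filter fun k => ε k = false).erase j := by
      simp [hi]
    have hPε' : P ε' = T i * ∏ k ∈ (Finset.univ.filter fun k => ε k = false).erase j, T k := by
      simp only [hP]; rw [hfil, Finset.prod_insert hiS]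
    have hPε : P ε = T j * ∏ k ∈ (Finset.univ.filter fun k => ε k = false).erase j, T k := by
      simp only [hP]; rw [← Finset.mul_prod_erase _ _ hjS]
    rw [hΦ, hPε', hPε, smul_smul]
    congr 1
    field_simp [hT0 i]
  -- the swap also preserves the weight
  have wkey : ∀ (ε : Fin m → Bool) (i j : Fin m), i ≠ j → ε i = true → ε j = false →
      (Finset.univ.filter fun k =>
        (fun k => if k = i then false else if k = j then true else ε k) k = true).card
      = (Finset.univ.filter fun k => ε k = true).card := by
    intro ε i j hij hi hj
    have hiS : i ∈ Finset.univ.filter fun k => ε k = true := by simp [hi]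
    have hfil : (Finset.univ.filter fun k =>
        (fun k => if k = i then false else if k = j then true else ε k) k = true)
        = insert j ((Finset.univ.filter fun k => ε k = true).erase i) := by
      ext k
      simp only [Finset.mem_insert, Finset.mem_erase, Finset.mem_filter, Finset.mem_univ,
        true_and]
      by_cases hk : k = i
      · subst hk; simp [hij, hi]
      · by_cases hkj : k = j
        · subst hkj; simp [hk]
        · simp [hk, hkj]
    have hjS : j ∉ (Finset.univ.filter fun k => ε k = true).erase i := by
      simp [hj]
    rw [hfil, Finset.card_insert_of_notMem hjS, Finset.card_erase_of_mem hiS]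
    have : 0 < (Finset.univ.filter fun k => ε k = true).card :=
      Finset.card_pos.mpr ⟨i, hiS⟩
    omega
  -- main invariance, by induction on the (bounded) Hamming distance
  have main : ∀ (d : ℕ) (ε η : Fin m → Bool),
      (Finset.univ.filter fun k => ε k ≠ η k).card ≤ d →
      (Finset.univ.filter fun i => ε i = true).card
        = (Finset.univ.filter fun i => η i = true).card →
      P ε • Φ ε = P η • Φ η := by
    intro d
    induction d with
    | zero =>
      intro ε η hcard _
      have heq : ε = η := by
        funext k
        by_contra hk
        have hk' : k ∈ Finset.univ.filter fun k => ε k ≠ η k := by simp [hk]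
        have := Finset.card_pos.mpr ⟨k, hk'⟩
        omega
      rw [heq]
    | succ n ih =>
      intro ε η hcard hw
      by_cases heq : ε = η
      · rw [heq]
      · have hAB : (Finset.univ.filter fun k => ε k = true)
            ≠ (Finset.univ.filter fun k => η k = true) := by
          intro h
          apply heq
          funext k
          have : ε k = true ↔ η k = true := by
            constructor <;> intro hkk
            · have : k ∈ Finset.univ.filter fun k => η k = true := by
                rw [← h]; simp [hkk]
              simpa using this
            · have : k ∈ Finset.univ.filter fun k => ε k = true := by
                rw [h]; simp [hkk]
              simpa using this
          cases hε : ε k <;> cases hη : η k <;> simp_all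
        obtain ⟨i, hi⟩ : ∃ i, ε i = true ∧ η i = false := by
          by_contra h
          push_neg at h
          apply hAB
          apply Finset.eq_of_subset_of_card_le _ (le_of_eq hw.symm)
          intro k hk
          simp only [Finset.mem_filter, Finset.mem_univ, true_and] at hk ⊢
          have := h k hk
          cases hη : η k
          · exact absurd hη this
          · rfl
        obtain ⟨j, hj⟩ : ∃ j, η j = true ∧ ε j = false := by
          by_contra h
          push_neg at h
          apply hAB.symm
          apply Finset.eq_of_subset_of_card_le _ (le_of_eq hw)
          intro k hk
          simp only [Finset.mem_filter, Finset.mem_univ, true_and] at hk ⊢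
          have := h k hk
          cases hε : ε k
          · exact absurd hε this
          · rfl
        have hij : i ≠ j := by
          intro h; rw [h] at hi; rw [hi.1] at hj; exact absurd hj.2 (by simp)
        set ε' : Fin m → Bool := fun k => if k = i then false else if k = j then true else ε k
          with hε'
        have hk1 := key ε i j hij hi.1 hj.2
        have hw1 := wkey ε i j hij hi.1 hj.2
        have hiD : i ∈ Finset.univ.filter fun k => ε k ≠ η k := by
          simp [hi.1, hi.2]
        have hsub : (Finset.univ.filter fun k => ε' k ≠ η k)
            ⊆ (Finset.univ.filter fun k => ε k ≠ η k).erase i := by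
          intro k hk
          simp only [Finset.mem_filter, Finset.mem_univ, true_and, Finset.mem_erase] at hk ⊢
          by_cases hki : k = i
          · exfalso; apply hk; subst hki; simp [hε', hi.2]
          · refine ⟨hki, ?_⟩
            by_cases hkj : k = j
            · exfalso; apply hk; subst hkj; simp [hε', hki, hj.1]
            · intro h; apply hk; simp [hε', hki, hkj, h]
        have hdist : (Finset.univ.filter fun k => ε' k ≠ η k).card ≤ n := by
          have h1 := Finset.card_le_card hsub
          rw [Finset.card_erase_of_mem hiD] at h1
          omega
        have := ih ε' η hdist (by rw [hw1]; exact hw)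
        rw [hk1]
        exact this
  have Pne : ∀ ε : Fin m → Bool, P ε ≠ 0 := by
    intro ε
    simp only [hP]
    exact Finset.prod_ne_zero_iff.mpr fun i _ => hT0 i
  constructor
  · intro ε η hw
    exact main _ ε η le_rfl hw
  · intro k hk
    by_cases h : ∃ ε : Fin m → Bool, (Finset.univ.filter fun i => ε i = true).card = k
    · obtain ⟨ε₀, hε₀⟩ := h
      refine ⟨P ε₀ • Φ ε₀, fun ε hε => ?_⟩
      have := main _ ε ε₀ le_rfl (hε.trans hε₀.symm)
      rw [← this, smul_smul, inv_mul_cancel₀ (Pne ε), one_smul]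
    · exact ⟨0, fun ε hε => absurd ⟨ε, hε⟩ h⟩
end

section
/- Let y_1,…,y_m be pairwise distinct elements of a field K. Then the m×m matrix whose (k,i) entry is e_{m−k}(y_1,…,ŷ_i,…,y_m), the elementary symmetric polynomial of degree m−k in the m−1 quantities obtained by omitting y_i (1 ≤ k,i ≤ m), is invertible. -/
/-- The elementary symmetric function `e_r` of the family `(f i)_{i ∈ s}`,
with the conventions `e_0 = 1` and `e_r = 0` for `r > #s`. -/
def esym {ι : Type*} [DecidableEq ι] {K : Type*} [CommRing K]
    (s : Finset ι) (f : ι → K) (r : ℕ) : K :=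
  ∑ A ∈ s.powersetCard r, ∏ i ∈ A, f i

lemma esym_eval {ι : Type*} [DecidableEq ι] {K : Type*} [CommRing K]
    (s : Finset ι) (f : ι → K) (t : K) :
    ∏ j ∈ s, (t - f j) =
      ∑ j ∈ Finset.range (s.card + 1), (-1) ^ j * esym s f j * t ^ (s.card - j) := by
  have h := congrArg (Polynomial.eval t)
    (Multiset.prod_X_sub_X_eq_sum_esymm (s.val.map f))
  simp only [Polynomial.eval_multiset_prod, Multiset.map_map, Function.comp,
    Polynomial.eval_sub, Polynomial.eval_X, Polynomial.eval_C,
    Polynomial.eval_finset_sum, Polynomial.eval_mul, Polynomial.eval_pow,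
    Polynomial.eval_one, Polynomial.eval_neg, Multiset.card_map] at h
  rw [Finset.prod, show (Multiset.map (fun x => t - f x) s.val) =
    (Multiset.map ((fun x => t - f x)) s.val) from rfl] at *
  rw [h]
  refine Finset.sum_congr rfl fun j hj => ?_
  rw [Finset.esymm_map_val, esym, mul_assoc]
  rfl

/-- If `y_1, …, y_m` are pairwise distinct elements of a field, the `m × m`
matrix whose `(k, i)` entry (here `k, i : Fin m` stand for the 1-indexed
`k+1, i+1`) is `e_{m-k}` of the `m-1` quantities obtained by omitting `y_i`
is invertible. -/
theorem statement8 {K : Type*} [Field K] (m : ℕ) (y : Fin m → K)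
    (hy : Function.Injective y) :
    IsUnit (Matrix.of fun k i : Fin m =>
      esym (Finset.univ.erase i) y (m - 1 - (k : ℕ))) := by
  rcases Nat.eq_zero_or_pos m with rfl | hm
  · exact (Matrix.isUnit_iff_isUnit_det _).2 (by simp [Matrix.det_fin_zero])
  set A : Matrix (Fin m) (Fin m) K :=
    Matrix.of fun k i : Fin m => esym (Finset.univ.erase i) y (m - 1 - (k : ℕ)) with hA
  set N : Matrix (Fin m) (Fin m) K :=
    Matrix.of fun l k : Fin m => (-1 : K) ^ (m - 1 - (k : ℕ)) * y l ^ (k : ℕ) with hN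
  have key : N * A = Matrix.diagonal fun i => ∏ j ∈ Finset.univ.erase i, (y i - y j) := by
    ext l i
    rw [Matrix.mul_apply]
    have hcard : (Finset.univ.erase i).card = m - 1 := by
      simp [Finset.card_erase_of_mem, Finset.card_univ]
    have he := esym_eval (Finset.univ.erase i) y (y l)
    rw [hcard, Nat.sub_add_cancel hm] at he
    have hsum : ∑ k : Fin m, N l k * A k i
        = ∏ j ∈ Finset.univ.erase i, (y l - y j) := by
      rw [he]
      refine Finset.sum_bij' (fun (k : Fin m) _ => m - 1 - (k : ℕ))
        (fun n _ => (⟨m - 1 - n, by omega⟩ : Fin m)) ?_ ?_ ?_ ?_ ?_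
      · intro k _; simp only [Finset.mem_range]; omega
      · intro n _; exact Finset.mem_univ _
      · intro k _; have := k.isLt; ext; simp; omega
      · intro n hn; simp only [Finset.mem_range] at hn; simp only [Fin.val_mk]; omega
      · intro k _
        have hk : m - 1 - (m - 1 - (k : ℕ)) = (k : ℕ) := by have := k.isLt; omega
        simp only [hN, hA, Matrix.of_apply, hk]
        ring
    rw [hsum]
    rcases eq_or_ne l i with rfl | hne
    · simp [Matrix.diagonal]
    · rw [Matrix.diagonal_apply_ne _ hne]
      exact Finset.prod_eq_zero (Finset.mem_erase.2 ⟨hne, Finset.mem_univ l⟩) (by ring)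
  have hd : IsUnit (N * A).det := by
    rw [key, Matrix.det_diagonal]
    rw [isUnit_iff_ne_zero, Finset.prod_ne_zero_iff]
    intro i _
    rw [Finset.prod_ne_zero_iff]
    intro j hj
    exact sub_ne_zero.2 fun h => (Finset.mem_erase.1 hj).1 (hy h.symm)
  rw [Matrix.det_mul] at hd
  exact (Matrix.isUnit_iff_isUnit_det _).2 (isUnit_of_mul_isUnit_right hd)
end

section
/- Let K be a field, V a K-vector space, ∇ : V → V a K-linear map, T_1,…,T_m pairwise distinct nonzero elements of K, and H_1,…,H_m ∈ V with ∇H_i = T_i·H_i for each i. Set Φ_μ := Σ_{j=1}^{m} (∏_{s≠j}(1 − T_j/T_s))^{-1}·H_j. Suppose P_1,…,P_m ∈ V satisfy, for every 1 ≤ i ≤ m, H_i = Σ_{k=1}^{m} e_{m−k}( (1/T_s)_{s≠i} )·P_k. Then for each 1 ≤ k ≤ m one has P_k = (−∇)^{m−k}Φ_μ, and explicitly P_k = Σ_{j=1}^{m} (∏_{s≠j}(1 − T_j/T_s))^{-1}·(−T_j)^{m−k}·H_j. -/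
/-- The distinguished element `Φ_μ = ∑_j (∏_{s≠j} (1 - T_j/T_s))⁻¹ • H_j`. -/
noncomputable def Phimu {K : Type*} [Field K] {V : Type*} [AddCommGroup V] [Module K V]
    (m : ℕ) (T : Fin m → K) (H : Fin m → V) : V :=
  ∑ j, (∏ s ∈ Finset.univ.erase j, (1 - T j / T s))⁻¹ • H j

lemma esym_gen {ι : Type*} [DecidableEq ι] {K : Type*} [CommRing K]
    (s : Finset ι) (f : ι → K) (x : K) :
    ∑ r ∈ Finset.range (s.card + 1), esym s f r * x ^ r = ∏ i ∈ s, (1 + f i * x) := by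
  have h : ∏ i ∈ s, (f i * x + 1) = ∑ t ∈ s.powerset, (∏ i ∈ t, (f i * x)) * ∏ i ∈ s \ t, (1:K) :=
    Finset.prod_add _ _ _
  simp only [Finset.prod_const_one, mul_one] at h
  have h2 : ∑ t ∈ s.powerset, ∏ i ∈ t, (f i * x)
      = ∑ r ∈ Finset.range (s.card + 1), ∑ t ∈ s.powersetCard r, ∏ i ∈ t, (f i * x) :=
    Finset.sum_powerset _ _
  simp only [add_comm (1:K)] at *
  rw [h, h2]
  refine Finset.sum_congr rfl fun r _ => ?_
  rw [esym, Finset.sum_mul]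
  refine Finset.sum_congr rfl fun t ht => ?_
  rw [Finset.prod_mul_distrib, Finset.prod_const,
    (Finset.mem_powersetCard.mp ht).2]

/-- Theorem 3.1 of Bergeron–Garsia (formulas 3.17 and 3.20): if vectors
`P_1, …, P_m` (here `P k` for `k : Fin m` stands for the 1-indexed `P_{k+1}`)
satisfy `H_i = ∑_{k=1}^m e_{m-k}((1/T_s)_{s≠i}) • P_k` for every `i`, then
`P_k = (-∇)^{m-k} Φ_μ`, and explicitly
`P_k = ∑_j (∏_{s≠j}(1 - T_j/T_s))⁻¹ (-T_j)^{m-k} • H_j`. -/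
theorem statement9 {K : Type*} [Field K] {V : Type*} [AddCommGroup V] [Module K V]
    (m : ℕ) (T : Fin m → K) (hT0 : ∀ i, T i ≠ 0) (hTinj : Function.Injective T)
    (nabla : Module.End K V) (H : Fin m → V)
    (heig : ∀ i, nabla (H i) = T i • H i)
    (P : Fin m → V)
    (hP : ∀ i, H i = ∑ k : Fin m,
      esym (Finset.univ.erase i) (fun s => (T s)⁻¹) (m - 1 - (k : ℕ)) • P k) :
    ∀ k : Fin m,
      P k = ((-nabla) ^ (m - 1 - (k : ℕ))) (Phimu m T H) ∧
      P k = ∑ j, (∏ s ∈ Finset.univ.erase j, (1 - T j / T s))⁻¹ •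
        ((-T j) ^ (m - 1 - (k : ℕ)) • H j) := by
  intro k
  classical
  set c : Fin m → K := fun j => (∏ s ∈ Finset.univ.erase j, (1 - T j / T s))⁻¹ with hc
  set M : Matrix (Fin m) (Fin m) K :=
    fun i l => esym (Finset.univ.erase i) (fun s => (T s)⁻¹) (m - 1 - (l : ℕ)) with hMdef
  set N : Matrix (Fin m) (Fin m) K := fun l j => c j * (-T j) ^ (m - 1 - (l : ℕ)) with hNdef
  have hcard : ∀ i : Fin m, (Finset.univ.erase i).card = m - 1 := by
    intro i
    rw [Finset.card_erase_of_mem (Finset.mem_univ i), Finset.card_univ, Fintype.card_fin]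
  have hm : 1 ≤ m := k.pos
  -- key product evaluation
  have hprod : ∀ i j : Fin m,
      ∑ l : Fin m, M i l * (-T j) ^ (m - 1 - (l : ℕ))
        = ∏ s ∈ Finset.univ.erase i, (1 - T j / T s) := by
    intro i j
    have h1 : ∑ l : Fin m, M i l * (-T j) ^ (m - 1 - (l : ℕ))
        = ∑ r ∈ Finset.range m,
          esym (Finset.univ.erase i) (fun s => (T s)⁻¹) (m - 1 - r) * (-T j) ^ (m - 1 - r) := by
      rw [Finset.sum_range fun r =>
        esym (Finset.univ.erase i) (fun s => (T s)⁻¹) (m - 1 - r) * (-T j) ^ (m - 1 - r)]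
    rw [h1, Finset.sum_range_reflect
      (fun r => esym (Finset.univ.erase i) (fun s => (T s)⁻¹) r * (-T j) ^ r) m]
    have key := esym_gen (Finset.univ.erase i) (fun s => (T s)⁻¹) (-T j)
    rw [hcard i, Nat.sub_add_cancel hm] at key
    rw [key]
    refine Finset.prod_congr rfl fun s _ => ?_
    field_simp
    ring
  have hMN : M * N = 1 := by
    ext i j
    rw [Matrix.mul_apply, Matrix.one_apply]
    have hsum : ∑ l : Fin m, M i l * N l j
        = c j * ∑ l : Fin m, M i l * (-T j) ^ (m - 1 - (l : ℕ)) := by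
      rw [Finset.mul_sum]
      exact Finset.sum_congr rfl fun l _ => by ring
    rw [hsum, hprod]
    by_cases hij : i = j
    · subst hij
      rw [if_pos rfl, hc]
      refine inv_mul_cancel₀ ?_
      refine Finset.prod_ne_zero_iff.mpr fun s hs => sub_ne_zero_of_ne fun h1 => ?_
      rw [eq_div_iff (hT0 s), one_mul] at h1
      exact (Finset.mem_erase.mp hs).1 (hTinj h1)
    · rw [if_neg hij]
      have hji : j ∈ Finset.univ.erase i :=
        Finset.mem_erase.mpr ⟨fun h => hij h.symm, Finset.mem_univ _⟩
      rw [Finset.prod_eq_zero hji (by rw [div_self (hT0 j)]; ring), mul_zero]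
  have hNM : N * M = 1 := mul_eq_one_comm.mp hMN
  -- P l = ∑ i, N l i • H i
  have hPform : ∀ l : Fin m, P l = ∑ i, N l i • H i := by
    intro l
    have step : ∑ i, N l i • H i = P l := by
      calc ∑ i, N l i • H i
          = ∑ i, N l i • ∑ k' : Fin m, M i k' • P k' := by
            refine Finset.sum_congr rfl fun i _ => ?_
            rw [← hP i]
        _ = ∑ k' : Fin m, (∑ i, N l i * M i k') • P k' := by
            simp only [Finset.smul_sum, smul_smul]
            rw [Finset.sum_comm]
            exact Finset.sum_congr rfl fun k' _ => (Finset.sum_smul).symm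
        _ = P l := by
            have h1 : ∀ k' : Fin m, (∑ i, N l i * M i k')
                = (1 : Matrix (Fin m) (Fin m) K) l k' := by
              intro k'; rw [← hNM, Matrix.mul_apply]
            simp only [h1, Matrix.one_apply]
            rw [Finset.sum_eq_single l (fun b _ hb => by rw [if_neg (Ne.symm hb), zero_smul])
              (fun h => absurd (Finset.mem_univ l) h)]
            rw [if_pos rfl, one_smul]
    exact step.symm
  have part2 : P k = ∑ j, c j • ((-T j) ^ (m - 1 - (k : ℕ)) • H j) := by
    rw [hPform k]
    exact Finset.sum_congr rfl fun j _ => by rw [hNdef, smul_smul]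
  refine ⟨?_, part2⟩
  -- part 1
  have hpow : ∀ (n : ℕ) (j : Fin m), ((-nabla) ^ n) (H j) = (-T j) ^ n • H j := by
    intro n j
    induction n with
    | zero => simp
    | succ n ih =>
      rw [pow_succ, Module.End.mul_apply]
      have hneg : (-nabla) (H j) = (-T j) • H j := by
        simp [heig j]
      rw [hneg, map_smul, ih, smul_smul, mul_comm, ← pow_succ]
  rw [part2, Phimu, map_sum]
  refine Finset.sum_congr rfl fun j _ => ?_
  rw [map_smul, hpow]
end

section
/- Let K be a field, V a K-vector space, ∇ : V → V a K-linear map, T_1,…,T_m pairwise distinct nonzero elements of K, and H_1,…,H_m ∈ V with ∇H_i = T_i·H_i for each i. Set Φ_μ := Σ_{j=1}^{m} (∏_{s≠j}(1 − T_j/T_s))^{-1}·H_j and Φ⁽ᵏ⁾ := (−∇)^{m−k}Φ_μ for 1 ≤ k ≤ m. Then Σ_{k=1}^{m} e_{m−k}(1/T_1,…,1/T_m)·Φ⁽ᵏ⁾ = (T_1 T_2 ⋯ T_m)^{-1}·∇Φ⁽¹⁾. -/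
open Finset

section Esym

variable {ι R : Type*} [DecidableEq ι] [CommRing R]

lemma esym_card (s : Finset ι) (f : ι → R) : esym s f #s = ∏ i ∈ s, f i := by
  rw [esym, powersetCard_self, sum_singleton]

lemma prod_one_add_mul_eq_sum_esym (s : Finset ι) (f : ι → R) (x : R) :
    ∏ i ∈ s, (1 + x * f i) = ∑ n ∈ range (#s + 1), esym s f n * x ^ n := by
  rw [prod_one_add, sum_powerset]
  refine sum_congr rfl fun n _ => ?_
  rw [esym, sum_mul]
  refine sum_congr rfl fun t ht => ?_
  rw [prod_mul_distrib, prod_const, (mem_powersetCard.1 ht).2, mul_comm]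

lemma sum_range_esym_mul_pow_of_prod_eq_zero (s : Finset ι) (f : ι → R) {x : R}
    (hx : ∏ i ∈ s, (1 + x * f i) = 0) :
    ∑ n ∈ range #s, esym s f n * x ^ n = -((∏ i ∈ s, f i) * x ^ #s) := by
  rw [prod_one_add_mul_eq_sum_esym, sum_range_succ, esym_card] at hx
  exact eq_neg_of_add_eq_zero_left hx

end Esym

lemma Module.End.pow_apply_of_apply_eq_smul {R M : Type*} [CommSemiring R] [AddCommMonoid M]
    [Module R M] {f : Module.End R M} {t : R} {v : M} (hv : f v = t • v) (n : ℕ) :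
    (f ^ n) v = t ^ n • v := by
  induction n with
  | zero => simp
  | succ n ih => rw [pow_succ', Module.End.mul_apply, ih, map_smul, hv, smul_smul, pow_succ]

section Eigenvectors

variable {ι K V : Type*} [Fintype ι] [DecidableEq ι] [Field K] [AddCommGroup V] [Module K V]

lemma sum_range_esym_inv_mul_neg_pow (T : ι → K) {j : ι} (hTj : T j ≠ 0) :
    ∑ n ∈ range (Fintype.card ι), esym univ (fun i => (T i)⁻¹) n * (-T j) ^ n =
      (∏ i, T i)⁻¹ * (T j * (-T j) ^ (Fintype.card ι - 1)) := by
  have hroot : ∏ i, (1 + -T j * (T i)⁻¹) = 0 :=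
    prod_eq_zero (mem_univ j) (by rw [neg_mul, mul_inv_cancel₀ hTj, add_neg_cancel])
  have : Nonempty ι := ⟨j⟩
  rw [← card_univ, sum_range_esym_mul_pow_of_prod_eq_zero _ _ hroot, card_univ,
    ← pow_sub_one_mul Fintype.card_ne_zero, prod_inv_distrib]
  ring

lemma sum_esym_inv_smul_neg_pow_apply_of_mem_span (T : ι → K) (hT0 : ∀ i, T i ≠ 0)
    (nabla : Module.End K V) (H : ι → V) (heig : ∀ i, nabla (H i) = T i • H i)
    {v : V} (hv : v ∈ Submodule.span K (Set.range H)) :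
    ∑ n ∈ range (Fintype.card ι), esym univ (fun i => (T i)⁻¹) n • ((-nabla) ^ n) v =
      (∏ i, T i)⁻¹ • nabla (((-nabla) ^ (Fintype.card ι - 1)) v) := by
  let lhs : Module.End K V :=
    ∑ n ∈ range (Fintype.card ι), esym univ (fun i => (T i)⁻¹) n • (-nabla) ^ n
  let rhs : Module.End K V := (∏ i, T i)⁻¹ • (nabla * (-nabla) ^ (Fintype.card ι - 1))
  suffices Set.EqOn lhs rhs (Set.range H) by
    simpa [lhs, rhs] using LinearMap.eqOn_span this hv
  rintro _ ⟨j, rfl⟩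
  have hneg : (-nabla) (H j) = -T j • H j := by rw [LinearMap.neg_apply, heig, neg_smul]
  simp only [lhs, rhs, LinearMap.sum_apply, LinearMap.smul_apply, Module.End.mul_apply,
    Module.End.pow_apply_of_apply_eq_smul hneg, map_smul, heig, smul_smul]
  rw [← sum_smul, sum_range_esym_inv_mul_neg_pow T (hT0 j)]
  congr 1
  ring

end Eigenvectors

theorem statement10_general {K : Type*} [Field K] {V : Type*} [AddCommGroup V] [Module K V]
    (m : ℕ) (T : Fin m → K) (hT0 : ∀ i, T i ≠ 0)
    (nabla : Module.End K V) (H : Fin m → V)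
    (heig : ∀ i, nabla (H i) = T i • H i) :
    ∑ k : Fin m, esym Finset.univ (fun i => (T i)⁻¹) (m - 1 - (k : ℕ)) •
        ((-nabla) ^ (m - 1 - (k : ℕ))) (Phimu m T H) =
      (∏ i, T i)⁻¹ • nabla (((-nabla) ^ (m - 1)) (Phimu m T H)) := by
  have hΦ : Phimu m T H ∈ Submodule.span K (Set.range H) :=
    Submodule.sum_mem _ fun j _ => Submodule.smul_mem _ _ (Submodule.subset_span ⟨j, rfl⟩)
  have key := sum_esym_inv_smul_neg_pow_apply_of_mem_span T hT0 nabla H heig hΦ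
  rw [Fintype.card_fin] at key
  rw [Fin.sum_univ_eq_sum_range
    (fun k => esym univ (fun i => (T i)⁻¹) (m - 1 - k) • ((-nabla) ^ (m - 1 - k)) (Phimu m T H)),
    sum_range_reflect (fun n => esym univ (fun i => (T i)⁻¹) n • ((-nabla) ^ n) (Phimu m T H)),
    key]

/-- Theorem 3.2, first identity (3.36), of Bergeron–Garsia: with
`Φ⁽ᵏ⁾ := (-∇)^{m-k} Φ_μ` (here `k : Fin m` stands for the 1-indexed `k+1`),
`∑_{k=1}^m e_{m-k}(1/T_1, …, 1/T_m) • Φ⁽ᵏ⁾ = (T_1 ⋯ T_m)⁻¹ • ∇ Φ⁽¹⁾`. -/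
theorem statement10 {K : Type*} [Field K] {V : Type*} [AddCommGroup V] [Module K V]
    (m : ℕ) (T : Fin m → K) (hT0 : ∀ i, T i ≠ 0) (hTinj : Function.Injective T)
    (nabla : Module.End K V) (H : Fin m → V)
    (heig : ∀ i, nabla (H i) = T i • H i) :
    ∑ k : Fin m, esym Finset.univ (fun i => (T i)⁻¹) (m - 1 - (k : ℕ)) •
        ((-nabla) ^ (m - 1 - (k : ℕ))) (Phimu m T H) =
      (∏ i, T i)⁻¹ • nabla (((-nabla) ^ (m - 1)) (Phimu m T H)) :=
  statement10_general m T hT0 nabla H heig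
end

section
/- Let K be a field, V a K-vector space, ∇ : V → V a K-linear map, T_1,…,T_m pairwise distinct nonzero elements of K, and H_1,…,H_m ∈ V with ∇H_i = T_i·H_i for each i. Set Φ_μ := Σ_{j=1}^{m} (∏_{s≠j}(1 − T_j/T_s))^{-1}·H_j. Then for every subset S = {i_1 < i_2 < ⋯ < i_k} of {1,…,m} with k ≥ 1: ∏_{i ∉ S} (id − T_i^{-1}∇) applied to Φ_μ equals the divided difference Δ[1/T_{i_1},…,1/T_{i_k}; H_{i_1},…,H_{i_k}]. -/
/-- The vector-valued divided difference
`Δ[y_1,…,y_k; A_1,…,A_k]`, defined recursively by `Δ[y; A] = A` and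
`Δ[y_1,…,y_k; A_1,…,A_k] = (y_1 Δ[y_1,…,y_{k-1}; A_1,…,A_{k-1}]
  - y_k Δ[y_2,…,y_k; A_2,…,A_k]) / (y_1 - y_k)`,
here taking a single list of pairs `(y_i, A_i)`. -/
noncomputable def divDiff {K : Type*} [Field K] {V : Type*} [AddCommGroup V] [Module K V] :
    List (K × V) → V
  | [] => 0
  | [p] => p.2
  | p :: q :: rest =>
      (p.1 - ((q :: rest).getLast (List.cons_ne_nil q rest)).1)⁻¹ •
        (p.1 • divDiff ((p :: q :: rest).dropLast) -
          ((q :: rest).getLast (List.cons_ne_nil q rest)).1 • divDiff (q :: rest))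
  termination_by l => l.length
  decreasing_by
  · simp [List.length_dropLast]
  · simp


/-!
Write `phimuOn T H s = ∑_{j ∈ s} (∏_{i ∈ s, i ≠ j} (1 - T_j/T_i))⁻¹ • H_j`, so that `Φ_μ` is
`phimuOn` of the full index set. Both sides of the theorem equal `phimuOn T H S`.
On the left, `∏_{i ∉ S} (1 - ∇/T_i)` acts on `H_j` by the scalar `∏_{i ∉ S} (1 - T_j/T_i)`, which
kills the `H_j` with `j ∉ S` and cancels the factors `i ∉ S` in the coefficient of `H_j` for `j ∈ S`.
On the right, `phimuOn` satisfies the recursion of the divided difference in the nodes `1/T_i`,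
which is a partial-fraction identity in the three cases `j = a`, `j = b`, `j ∉ {a, b}`.
-/

namespace BergeronGarsia

open Finset

variable {K V ι : Type*} [Field K] [AddCommGroup V] [Module K V]

lemma divDiff_cons_append_singleton (p q : K × V) (l : List (K × V)) :
    divDiff (p :: (l ++ [q])) =
      (p.1 - q.1)⁻¹ • (p.1 • divDiff (p :: l) - q.1 • divDiff (l ++ [q])) := by
  obtain ⟨r, rest, hr⟩ : ∃ r rest, l ++ [q] = r :: rest :=
    List.exists_cons_of_ne_nil (by simp)
  have hlast : (r :: rest).getLast (List.cons_ne_nil r rest) = q := by simp [← hr]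
  have hdrop : (p :: r :: rest).dropLast = p :: l := by
    rw [← hr, ← List.cons_append, List.dropLast_concat]
  rw [hr, divDiff, hlast, hdrop]

open Polynomial in
lemma eval_prod_one_sub_C_inv_mul_X (T : ι → K) (s : Finset ι) (t : K) :
    (∏ i ∈ s, (1 - C (T i)⁻¹ * X)).eval t = ∏ i ∈ s, (1 - t / T i) := by
  simp [eval_prod, div_eq_inv_mul]

variable [DecidableEq ι]

noncomputable def phimuOn (T : ι → K) (H : ι → V) (s : Finset ι) : V :=
  ∑ j ∈ s, (∏ i ∈ s.erase j, (1 - T j / T i))⁻¹ • H j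

lemma Phimu_eq_phimuOn_univ (m : ℕ) (T : Fin m → K) (H : Fin m → V) :
    Phimu m T H = phimuOn T H univ :=
  rfl

lemma prod_erase_insert_of_ne {M : Type*} [CommMonoid M] (f : ι → M) {a j : ι} {s : Finset ι}
    (ha : a ∉ s) (hj : j ≠ a) :
    ∏ i ∈ (insert a s).erase j, f i = f a * ∏ i ∈ s.erase j, f i := by
  rw [erase_insert_of_ne hj.symm, prod_insert fun h => ha (mem_of_mem_erase h)]

lemma phimuOn_insert_insert {T : ι → K} (hT0 : ∀ i, T i ≠ 0) (hTinj : Function.Injective T)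
    (H : ι → V) {a b : ι} {C : Finset ι} (hab : a ≠ b) (ha : a ∉ C) (hb : b ∉ C) :
    phimuOn T H (insert a (insert b C)) =
      ((T a)⁻¹ - (T b)⁻¹)⁻¹ •
        ((T a)⁻¹ • phimuOn T H (insert a C) - (T b)⁻¹ • phimuOn T H (insert b C)) := by
  set k := ((T a)⁻¹ - (T b)⁻¹)⁻¹ with hk
  have hTa := hT0 a
  have hTb := hT0 b
  have hTab : T a ≠ T b := hTinj.ne hab
  have coeff_a : (1 - T a / T b)⁻¹ = k * (T a)⁻¹ := by
    rw [hk]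
    field_simp
  have coeff_b : (1 - T b / T a)⁻¹ = -(k * (T b)⁻¹) := by
    rw [hk]
    field_simp
    ring
  have coeff_C : ∀ j ∈ C, (1 - T j / T a)⁻¹ * (1 - T j / T b)⁻¹ =
      k * ((T a)⁻¹ * (1 - T j / T a)⁻¹ - (T b)⁻¹ * (1 - T j / T b)⁻¹) := by
    intro j hj
    have hja : T a - T j ≠ 0 := sub_ne_zero.2 (hTinj.ne (ne_of_mem_of_not_mem hj ha).symm)
    have hjb : T b - T j ≠ 0 := sub_ne_zero.2 (hTinj.ne (ne_of_mem_of_not_mem hj hb).symm)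
    rw [hk]
    field_simp
    ring
  simp only [phimuOn]
  rw [sum_insert (by simp [hab, ha]), sum_insert hb, sum_insert ha,
    sum_insert hb, erase_insert (by simp [hab, ha]), erase_insert ha,
    erase_insert hb, prod_erase_insert_of_ne _ (by simp [hab, ha]) hab.symm,
    erase_insert hb, prod_insert hb]
  have sum_C :
      ∑ j ∈ C, (∏ i ∈ (insert a (insert b C)).erase j, (1 - T j / T i))⁻¹ • H j =
        k • ((T a)⁻¹ • ∑ j ∈ C, (∏ i ∈ (insert a C).erase j, (1 - T j / T i))⁻¹ • H j -
          (T b)⁻¹ • ∑ j ∈ C, (∏ i ∈ (insert b C).erase j, (1 - T j / T i))⁻¹ • H j) := by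
    simp only [smul_sum, ← sum_sub_distrib]
    refine sum_congr rfl fun j hj => ?_
    obtain ⟨hja, hjb⟩ : j ≠ a ∧ j ≠ b :=
      ⟨ne_of_mem_of_not_mem hj ha, ne_of_mem_of_not_mem hj hb⟩
    rw [prod_erase_insert_of_ne _ (by simp [hab, ha]) hja, prod_erase_insert_of_ne _ hb hjb,
      prod_erase_insert_of_ne _ ha hja]
    simp only [mul_inv]
    rw [← mul_assoc, coeff_C j hj]
    module
  rw [sum_C, mul_inv, mul_inv, coeff_a, coeff_b]
  module

lemma divDiff_map_inv_eq_phimuOn {T : ι → K} (hT0 : ∀ i, T i ≠ 0)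
    (hTinj : Function.Injective T) (H : ι → V) {l : List ι} (hl : l.Nodup) :
    divDiff (l.map fun i => ((T i)⁻¹, H i)) = phimuOn T H l.toFinset := by
  induction h : l.length using Nat.strong_induction_on generalizing l with
  | _ n ih =>
  rcases l with _ | ⟨a, t⟩
  · simp [divDiff, phimuOn]
  rcases t.eq_nil_or_concat' with rfl | ⟨mid, b, rfl⟩
  · simp [divDiff, phimuOn]
  have hab : a ≠ b := by grind
  have ha : a ∉ mid := by grind
  have hb : b ∉ mid := by grind
  have ih_init := ih (a :: mid).length (by grind) (by grind) rfl
  have ih_tail := ih (mid ++ [b]).length (by grind) (by grind) rfl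
  simp only [List.map_cons, List.map_append, List.map_nil] at ih_init ih_tail ⊢
  rw [divDiff_cons_append_singleton, ih_init, ih_tail]
  simp only [List.toFinset_cons, List.toFinset_append, List.toFinset_nil, union_insert,
    union_empty]
  exact (phimuOn_insert_insert hT0 hTinj H hab (by simpa) (by simpa)).symm

lemma prod_erase_eq_prod_erase_mul_prod_compl [Fintype ι] {M : Type*} [CommMonoid M] (f : ι → M)
    {S : Finset ι} {j : ι} (hj : j ∈ S) :
    ∏ i ∈ univ.erase j, f i = (∏ i ∈ S.erase j, f i) * ∏ i ∈ Sᶜ, f i := by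
  rw [← prod_union ((disjoint_compl_right (a := S)).mono_left (S.erase_subset j))]
  congr 1
  ext i
  by_cases hij : i = j <;> simp [hij, hj, em]

open Polynomial in
lemma aeval_prod_compl_phimuOn_univ [Fintype ι] {T : ι → K} (hT0 : ∀ i, T i ≠ 0)
    (hTinj : Function.Injective T) {nabla : Module.End K V} {H : ι → V}
    (heig : ∀ i, nabla (H i) = T i • H i) (S : Finset ι) :
    aeval nabla (∏ i ∈ Sᶜ, (1 - C (T i)⁻¹ * X)) (phimuOn T H univ) = phimuOn T H S := by
  simp only [phimuOn, map_sum, map_smul, Module.End.aeval_apply_of_mem_apply_eq_smul (heig _),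
    eval_prod_one_sub_C_inv_mul_X, smul_smul]
  rw [← sum_subset S.subset_univ]
  · refine sum_congr rfl fun j hj => ?_
    have hcompl : ∏ i ∈ Sᶜ, (1 - T j / T i) ≠ 0 := by
      refine prod_ne_zero_iff.2 fun i hi => sub_ne_zero.2 fun h => ?_
      have hji : j = i := hTinj ((div_eq_one_iff_eq (hT0 i)).1 h.symm)
      exact mem_compl.1 hi (hji ▸ hj)
    rw [prod_erase_eq_prod_erase_mul_prod_compl _ hj, mul_inv, mul_assoc, inv_mul_cancel₀ hcompl,
      mul_one]
  · intro j _ hj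
    rw [prod_eq_zero (mem_compl.2 hj) (by rw [div_self (hT0 j), sub_self]), mul_zero,
      zero_smul]

end BergeronGarsia

open BergeronGarsia in
theorem statement12_general {K : Type*} [Field K] {V : Type*} [AddCommGroup V] [Module K V]
    (m : ℕ) (T : Fin m → K) (hT0 : ∀ i, T i ≠ 0) (hTinj : Function.Injective T)
    (nabla : Module.End K V) (H : Fin m → V)
    (heig : ∀ i, nabla (H i) = T i • H i)
    (S : Finset (Fin m)) :
    Polynomial.aeval nabla
        (∏ i ∈ Sᶜ, (1 - Polynomial.C (T i)⁻¹ * Polynomial.X))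
        (Phimu m T H) =
      divDiff ((S.sort (· ≤ ·)).map fun i => ((T i)⁻¹, H i)) := by
  rw [Phimu_eq_phimuOn_univ, aeval_prod_compl_phimuOn_univ hT0 hTinj heig,
    divDiff_map_inv_eq_phimuOn hT0 hTinj H (S.sort_nodup _), Finset.sort_toFinset]

/-- Proposition 3.4 of Bergeron–Garsia: for `S = {i_1 < ⋯ < i_k} ⊆ {1,…,m}`,
`∏_{i ∉ S} (1 - ∇/T_i)` applied to `Φ_μ` equals the divided difference
`Δ[1/T_{i_1},…,1/T_{i_k}; H_{i_1},…,H_{i_k}]`. -/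
theorem statement12 {K : Type*} [Field K] {V : Type*} [AddCommGroup V] [Module K V]
    (m : ℕ) (T : Fin m → K) (hT0 : ∀ i, T i ≠ 0) (hTinj : Function.Injective T)
    (nabla : Module.End K V) (H : Fin m → V)
    (heig : ∀ i, nabla (H i) = T i • H i)
    (S : Finset (Fin m)) (hS : S.Nonempty) :
    Polynomial.aeval nabla
        (∏ i ∈ Sᶜ, (1 - Polynomial.C (T i)⁻¹ * Polynomial.X))
        (Phimu m T H) =
      divDiff ((S.sort (· ≤ ·)).map fun i => ((T i)⁻¹, H i)) :=
  statement12_general m T hT0 hTinj nabla H heig S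
end

section
/- Let K be a field, V a K-vector space, ∇ : V → V a K-linear map, T_1,…,T_m pairwise distinct nonzero elements of K, and H_1,…,H_m ∈ V with ∇H_i = T_i·H_i for each i. Set Φ_μ := Σ_{j=1}^{m} (∏_{s≠j}(1 − T_j/T_s))^{-1}·H_j. Then for every nonempty subset S ⊆ {1,…,m}: ∏_{i ∉ S} (id − T_i^{-1}∇) applied to Φ_μ equals Σ_{i ∈ S} (∏_{r ∈ S, r ≠ i}(1 − T_i/T_r))^{-1}·H_i. -/
open Polynomial Finset

section

variable {K : Type*} [Field K] {ι : Type*}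

lemma Module.End.aeval_sum_smul_of_apply_eq_smul {V : Type*} [AddCommGroup V] [Module K V]
    {f : Module.End K V} {T : ι → K} {H : ι → V} (heig : ∀ i, f (H i) = T i • H i)
    (p : K[X]) (s : Finset ι) (c : ι → K) :
    aeval f p (∑ j ∈ s, c j • H j) = ∑ j ∈ s, (c j * p.eval (T j)) • H j := by
  simp only [map_sum, map_smul, Module.End.aeval_apply_of_mem_apply_eq_smul (heig _), smul_smul]

lemma eval_prod_one_sub_C_inv_mul_X (s : Finset ι) (T : ι → K) (a : K) :
    (∏ i ∈ s, (1 - C (T i)⁻¹ * X)).eval a = ∏ i ∈ s, (1 - a / T i) := by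
  simp [eval_prod, div_eq_inv_mul]

section Fintype

variable [Fintype ι] [DecidableEq ι] {T : ι → K} {S : Finset ι} {j : ι}

lemma prod_compl_one_sub_div_eq_zero (hT0 : T j ≠ 0) (hj : j ∉ S) :
    ∏ i ∈ Sᶜ, (1 - T j / T i) = 0 :=
  prod_eq_zero (mem_compl.2 hj) (by rw [div_self hT0, sub_self])

lemma prod_compl_one_sub_div_ne_zero (hT0 : ∀ i, T i ≠ 0) (hT : Function.Injective T)
    (hj : j ∈ S) : ∏ i ∈ Sᶜ, (1 - T j / T i) ≠ 0 := by
  refine prod_ne_zero_iff.2 fun i hi => sub_ne_zero.2 fun h => ?_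
  have hji : T j = T i := (div_eq_one_iff_eq (hT0 i)).1 h.symm
  exact mem_compl.1 hi (hT hji ▸ hj)

lemma inv_prod_erase_mul_prod_compl (f : ι → K) (hj : j ∈ S) (hf : ∏ i ∈ Sᶜ, f i ≠ 0) :
    (∏ s ∈ univ.erase j, f s)⁻¹ * ∏ i ∈ Sᶜ, f i = (∏ r ∈ S.erase j, f r)⁻¹ := by
  have hsplit : univ.erase j \ S.erase j = Sᶜ := by
    ext i
    simp only [mem_sdiff, mem_erase, mem_univ, mem_compl]
    grind
  rw [← prod_sdiff (erase_subset_erase j (subset_univ S)), hsplit, mul_inv,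
    mul_right_comm, inv_mul_cancel₀ hf, one_mul]

end Fintype

end

theorem statement13_general {K : Type*} [Field K] {V : Type*} [AddCommGroup V] [Module K V]
    (m : ℕ) (T : Fin m → K) (hT0 : ∀ i, T i ≠ 0) (hTinj : Function.Injective T)
    (nabla : Module.End K V) (H : Fin m → V)
    (heig : ∀ i, nabla (H i) = T i • H i)
    (S : Finset (Fin m)) :
    Polynomial.aeval nabla
        (∏ i ∈ Sᶜ, (1 - Polynomial.C (T i)⁻¹ * Polynomial.X))
        (Phimu m T H) =
      ∑ i ∈ S, (∏ r ∈ S.erase i, (1 - T i / T r))⁻¹ • H i := by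
  rw [Phimu, Module.End.aeval_sum_smul_of_apply_eq_smul heig]
  simp only [eval_prod_one_sub_C_inv_mul_X]
  rw [← sum_subset (subset_univ S) fun j _ hj => by
    rw [prod_compl_one_sub_div_eq_zero (hT0 j) hj, mul_zero, zero_smul]]
  refine sum_congr rfl fun j hj => ?_
  rw [inv_prod_erase_mul_prod_compl _ hj (prod_compl_one_sub_div_ne_zero hT0 hTinj hj)]

/-- Proposition 3.5 of Bergeron–Garsia (formula 3.26): for every nonempty
`S ⊆ {1,…,m}`, `∏_{i ∉ S}(1 - ∇/T_i)` applied to `Φ_μ` equals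
`∑_{i ∈ S} (∏_{r ∈ S, r ≠ i} (1 - T_i/T_r))⁻¹ • H_i`. -/
theorem statement13 {K : Type*} [Field K] {V : Type*} [AddCommGroup V] [Module K V]
    (m : ℕ) (T : Fin m → K) (hT0 : ∀ i, T i ≠ 0) (hTinj : Function.Injective T)
    (nabla : Module.End K V) (H : Fin m → V)
    (heig : ∀ i, nabla (H i) = T i • H i)
    (S : Finset (Fin m)) (hS : S.Nonempty) :
    Polynomial.aeval nabla
        (∏ i ∈ Sᶜ, (1 - Polynomial.C (T i)⁻¹ * Polynomial.X))
        (Phimu m T H) =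
      ∑ i ∈ S, (∏ r ∈ S.erase i, (1 - T i / T r))⁻¹ • H i :=
  statement13_general m T hT0 hTinj nabla H heig S
end

section
/- Let K be a field, let x_1,…,x_m be pairwise distinct nonzero elements of K, and let x_0, u_0, u_1, …, u_m ∈ K satisfy ∏_{s=0}^{m} x_s = ∏_{s=0}^{m} u_s. Then for every z ∈ K: ∏_{s=0}^{m}(1 − z·u_s) − ∏_{s=0}^{m}(1 − z·x_s) = z·Σ_{i=1}^{m} x_i^{-1}·( ∏_{s=0}^{m}(x_i − u_s) )·( ∏_{1≤s≤m, s≠i}(x_i − x_s) )^{-1}·∏_{1≤s≤m, s≠i}(1 − z·x_s). -/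
/-!
Both sides are evaluations at `z` of polynomials of degree at most `m + 1`. Since
`∏ x_s = ∏ u_s`, the top coefficients of the two products on the left cancel, so the left side
`D(z)` has degree at most `m`; it also vanishes at `z = 0`. The right side is the unique
polynomial of degree at most `m` that vanishes at `0` and agrees with `D` at the `m` distinct
points `x_i⁻¹`: it is Lagrange interpolation at the nodes `0, x_1⁻¹, …, x_m⁻¹`, written in the
variable `z` after clearing the denominators `z - x_j⁻¹ = -x_j⁻¹ (1 - z x_j)`.
-/

open Polynomial Finset

section LinearFactors

variable {R : Type*} [CommRing R] {ι : Type*}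

lemma natDegree_one_sub_C_mul_X_le (a : R) : (1 - C a * X).natDegree ≤ 1 := by
  compute_degree

lemma natDegree_prod_one_sub_C_mul_X_le (s : Finset ι) (a : ι → R) :
    (∏ i ∈ s, (1 - C (a i) * X)).natDegree ≤ #s := by
  refine (natDegree_prod_le _ _).trans ?_
  simpa using sum_le_card_nsmul s _ 1 fun i _ => natDegree_one_sub_C_mul_X_le (a i)

lemma coeff_prod_one_sub_C_mul_X_card (s : Finset ι) (a : ι → R) :
    (∏ i ∈ s, (1 - C (a i) * X)).coeff #s = ∏ i ∈ s, -a i := by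
  simpa [coeff_one] using
    coeff_prod_of_natDegree_le s _ 1 fun i _ => natDegree_one_sub_C_mul_X_le (a i)

lemma degree_prod_one_sub_C_mul_X_sub_prod_lt {s : Finset ι} {a b : ι → R}
    (h : ∏ i ∈ s, a i = ∏ i ∈ s, b i) :
    (∏ i ∈ s, (1 - C (a i) * X) - ∏ i ∈ s, (1 - C (b i) * X)).degree < (#s : WithBot ℕ) := by
  rw [degree_lt_iff_coeff_zero]
  intro n hn
  rw [coeff_sub, sub_eq_zero]
  rcases hn.eq_or_lt with rfl | hn
  · rw [coeff_prod_one_sub_C_mul_X_card, coeff_prod_one_sub_C_mul_X_card, prod_neg, prod_neg, h]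
  · rw [coeff_eq_zero_of_natDegree_lt ((natDegree_prod_one_sub_C_mul_X_le s a).trans_lt hn),
      coeff_eq_zero_of_natDegree_lt ((natDegree_prod_one_sub_C_mul_X_le s b).trans_lt hn)]

lemma natDegree_X_mul_sum_C_mul_prod_erase_le [Fintype ι] [DecidableEq ι] (c x : ι → R) :
    (X * ∑ i, C (c i) * ∏ j ∈ univ.erase i, (1 - C (x j) * X)).natDegree ≤ Fintype.card ι := by
  rw [mul_sum]
  refine natDegree_sum_le_of_forall_le _ _ fun i _ => ?_
  rw [← card_univ, ← card_erase_add_one (mem_univ i), add_comm, mul_left_comm]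
  exact (natDegree_C_mul_le _ _).trans <| natDegree_mul_le.trans <|
    add_le_add natDegree_X_le (natDegree_prod_one_sub_C_mul_X_le _ _)

end LinearFactors

section Field

variable {K : Type*} [Field K] {ι : Type*}

lemma eval_inv_prod_one_sub_C_mul_X {y : K} (hy : y ≠ 0) (s : Finset ι) (a : ι → K) :
    (∏ i ∈ s, (1 - C (a i) * X)).eval y⁻¹ = y⁻¹ ^ #s * ∏ i ∈ s, (y - a i) := by
  rw [eval_prod, ← prod_const, ← prod_mul_distrib]
  refine prod_congr rfl fun i _ => ?_
  simp only [eval_sub, eval_one, eval_mul, eval_C, eval_X]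
  field_simp

lemma eval_inv_prod_sub_prod_of_mem {y : K} (hy : y ≠ 0) {s : Finset ι} {a b : ι → K} {j : ι}
    (hj : j ∈ s) (hbj : b j = y) :
    (∏ i ∈ s, (1 - C (a i) * X) - ∏ i ∈ s, (1 - C (b i) * X)).eval y⁻¹ =
      y⁻¹ ^ #s * ∏ i ∈ s, (y - a i) := by
  have hb : ∏ i ∈ s, (y - b i) = 0 := prod_eq_zero hj (by rw [hbj, sub_self])
  rw [eval_sub, eval_inv_prod_one_sub_C_mul_X hy, eval_inv_prod_one_sub_C_mul_X hy, hb, mul_zero,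
    sub_zero]

variable [Fintype ι] [DecidableEq ι] {x : ι → K}

lemma eval_inv_X_mul_sum_C_mul_prod_erase (hx0 : ∀ i, x i ≠ 0) (c : ι → K) (k : ι) :
    (X * ∑ i, C (c i) * ∏ j ∈ univ.erase i, (1 - C (x j) * X)).eval (x k)⁻¹ =
      (x k)⁻¹ ^ Fintype.card ι * c k * ∏ j ∈ univ.erase k, (x k - x j) := by
  have hvanish : ∀ i ≠ k, (∏ j ∈ univ.erase i, (1 - C (x j) * X)).eval (x k)⁻¹ = 0 := by
    intro i hik
    rw [eval_inv_prod_one_sub_C_mul_X (hx0 k),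
      prod_eq_zero (mem_erase.mpr ⟨hik.symm, mem_univ k⟩) (sub_self _), mul_zero]
  simp only [eval_mul, eval_X, eval_finsetSum, eval_C]
  rw [sum_eq_single_of_mem k (mem_univ k) fun i _ hik => by rw [hvanish i hik, mul_zero],
    eval_inv_prod_one_sub_C_mul_X (hx0 k), ← card_univ, ← card_erase_add_one (mem_univ k),
    pow_succ']
  ring

/-- Lagrange interpolation at the nodes `0` and `x i⁻¹`, in the reversed variable. -/
theorem eq_X_mul_sum_of_natDegree_le_of_eval_zero (hx : Function.Injective x)
    (hx0 : ∀ i, x i ≠ 0) {D : K[X]} (hD : D.natDegree ≤ Fintype.card ι) (hD0 : D.eval 0 = 0) :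
    D = X * ∑ i, C (x i ^ Fintype.card ι * D.eval (x i)⁻¹ / ∏ j ∈ univ.erase i, (x i - x j)) *
      ∏ j ∈ univ.erase i, (1 - C (x j) * X) := by
  have hlt : ∀ p : K[X], p.natDegree ≤ Fintype.card ι →
      p.degree < (#(univ : Finset (Option ι)) : WithBot ℕ) :=
    fun p hp => (natDegree_le_iff_degree_le.mp hp).trans_lt <| by
      rw [card_univ, Fintype.card_option]; exact_mod_cast (Fintype.card ι).lt_succ_self
  refine eq_of_degree_sub_lt_of_eval_index_eq (v := fun o : Option ι => o.elim 0 fun i => (x i)⁻¹)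
    univ ?_ ((degree_sub_le _ _).trans_lt <|
      max_lt (hlt _ hD) (hlt _ (natDegree_X_mul_sum_C_mul_prod_erase_le _ _))) ?_
  · rintro (_ | i) - (_ | k) - h <;> simp only [Option.elim] at h
    · rfl
    · exact absurd h.symm (inv_ne_zero (hx0 k))
    · exact absurd h (inv_ne_zero (hx0 i))
    · rw [hx (inv_injective h)]
  · rintro (_ | k) -
    · simp [hD0]
    · have hP : ∏ j ∈ univ.erase k, (x k - x j) ≠ 0 :=
        prod_ne_zero_iff.mpr fun j hj => sub_ne_zero.mpr fun h => (mem_erase.mp hj).1 (hx h).symm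
      rw [Option.elim, eval_inv_X_mul_sum_C_mul_prod_erase hx0, mul_assoc, div_mul_cancel₀ _ hP,
        ← mul_assoc, ← mul_pow, inv_mul_cancel₀ (hx0 k), one_pow, one_mul]

end Field

/-- The Lagrange-interpolation identity (proof of Theorem 3.3 of
Bergeron–Garsia, formula 3.46): if `x_1, …, x_m` are pairwise distinct and
nonzero and `x_0 x_1 ⋯ x_m = u_0 u_1 ⋯ u_m`, then for every `z`,
`∏_{s=0}^m (1 - z u_s) - ∏_{s=0}^m (1 - z x_s)
  = z ∑_{i=1}^m x_i⁻¹ (∏_{s=0}^m (x_i - u_s)) (∏_{s≠i} (x_i - x_s))⁻¹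
      ∏_{s≠i} (1 - z x_s)`. -/
theorem statement16 {K : Type*} [Field K] (m : ℕ)
    (x₀ u₀ : K) (x u : Fin m → K)
    (hxinj : Function.Injective x) (hx0 : ∀ i, x i ≠ 0)
    (hprod : x₀ * ∏ s, x s = u₀ * ∏ s, u s) (z : K) :
    (1 - z * u₀) * ∏ s, (1 - z * u s) - (1 - z * x₀) * ∏ s, (1 - z * x s) =
      z * ∑ i, (x i)⁻¹ * ((x i - u₀) * ∏ s, (x i - u s)) *
        (∏ s ∈ Finset.univ.erase i, (x i - x s))⁻¹ *
        ∏ s ∈ Finset.univ.erase i, (1 - z * x s) := by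
  set a : Fin (m + 1) → K := Fin.cons u₀ u
  set b : Fin (m + 1) → K := Fin.cons x₀ x
  set D : K[X] := ∏ s, (1 - C (a s) * X) - ∏ s, (1 - C (b s) * X)
  have hD : D.natDegree ≤ m := by
    have h := degree_prod_one_sub_C_mul_X_sub_prod_lt (s := univ) (a := a) (b := b)
      (by simp [a, b, Fin.prod_univ_succ, hprod])
    rw [card_univ, Fintype.card_fin] at h
    exact natDegree_le_iff_degree_le.mpr (Order.le_of_lt_succ h)
  have hD0 : D.eval 0 = 0 := by simp [D, eval_prod]
  have hc : ∀ i, x i ^ m * D.eval (x i)⁻¹ = (x i)⁻¹ * ((x i - u₀) * ∏ s, (x i - u s)) :=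
    fun i => by
      rw [eval_inv_prod_sub_prod_of_mem (hx0 i) (mem_univ i.succ) (Fin.cons_succ _ _ _),
        card_univ, Fintype.card_fin, pow_succ, ← mul_assoc, ← mul_assoc, ← mul_pow,
        mul_inv_cancel₀ (hx0 i), one_pow, one_mul, Fin.prod_univ_succ]
      rfl
  have key := congrArg (eval z) (eq_X_mul_sum_of_natDegree_le_of_eval_zero hxinj hx0
    (hD.trans_eq (Fintype.card_fin m).symm) hD0)
  simp only [Fintype.card_fin, hc, div_eq_mul_inv] at key
  simpa only [D, a, b, eval_sub, eval_prod, eval_mul, eval_one, eval_C, eval_X, eval_finsetSum,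
    Fin.prod_univ_succ, Fin.cons_zero, Fin.cons_succ, mul_comm _ z] using key
end

section
/- Let m ≥ 1 and let l_1 > l_2 > ⋯ > l_m ≥ 0 and 0 ≤ a_1 < a_2 < ⋯ < a_m be integers (the colegs and coarms of the corner cells of a partition with m corners). In the Laurent polynomial ring ℤ[q,q^{-1},t,t^{-1}], set x_0 := t^{-1}q^{-1}, x_i := t^{l_i}q^{a_i} for 1 ≤ i ≤ m, u_0 := t^{l_1}q^{-1}, u_i := t^{l_{i+1}}q^{a_i} for 1 ≤ i ≤ m−1, and u_m := t^{-1}q^{a_m}. Then for every 1 ≤ k ≤ m there exists a polynomial B⁽ᵏ⁾(q,t) in q and t with nonnegative integer coefficients such that e_k(x_0,x_1,…,x_m) − e_k(u_0,u_1,…,u_m) = (1 − t^{-1})(1 − q^{-1})·B⁽ᵏ⁾(q,t). -/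
/-- The monomial `q^α t^β` in the Laurent polynomial ring
`ℤ[q, q⁻¹, t, t⁻¹]`, realized as the group algebra of `ℤ × ℤ` over `ℤ`. -/
noncomputable def qt (α β : ℤ) : AddMonoidAlgebra ℤ (ℤ × ℤ) :=
  AddMonoidAlgebra.single (α, β) 1

/- ### Auxiliary machinery -/

abbrev K2 := AddMonoidAlgebra ℤ (ℤ × ℤ)

lemma qt_mul (α β γ δ : ℤ) : qt α β * qt γ δ = qt (α + γ) (β + δ) := by
  simp [qt, AddMonoidAlgebra.single_mul_single, Prod.mk_add_mk]

lemma qt_zero_zero : qt 0 0 = 1 := by simp [qt]; rfl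

lemma qt_pow (α β : ℤ) (n : ℕ) : qt α β ^ n = qt (n * α) (n * β) := by
  induction n with
  | zero => simp [qt_zero_zero]
  | succ n ih => rw [pow_succ, ih, qt_mul]; congr 1 <;> push_cast <;> ring

noncomputable def phi (B : MvPolynomial (Fin 2) ℕ) : K2 :=
  MvPolynomial.aeval (fun i : Fin 2 => if i = 0 then qt 1 0 else qt 0 1)
    (B.map (Nat.castRingHom ℤ))

def Pos (z : K2) : Prop := ∃ B : MvPolynomial (Fin 2) ℕ, z = phi B

lemma phi_add (B C : MvPolynomial (Fin 2) ℕ) : phi (B + C) = phi B + phi C := by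
  simp [phi]

lemma phi_mul (B C : MvPolynomial (Fin 2) ℕ) : phi (B * C) = phi B * phi C := by
  simp [phi]

lemma Pos.add {x y : K2} (hx : Pos x) (hy : Pos y) : Pos (x + y) := by
  obtain ⟨B, rfl⟩ := hx; obtain ⟨C, rfl⟩ := hy; exact ⟨B + C, (phi_add B C).symm⟩

lemma Pos.mul {x y : K2} (hx : Pos x) (hy : Pos y) : Pos (x * y) := by
  obtain ⟨B, rfl⟩ := hx; obtain ⟨C, rfl⟩ := hy; exact ⟨B * C, (phi_mul B C).symm⟩

lemma Pos_zero : Pos 0 := ⟨0, by simp [phi]⟩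

lemma Pos_one : Pos 1 := ⟨1, by simp [phi]⟩

lemma Pos_qt (p r : ℕ) : Pos (qt p r) := by
  refine ⟨MvPolynomial.X 0 ^ p * MvPolynomial.X 1 ^ r, ?_⟩
  simp only [phi, map_mul, map_pow, MvPolynomial.map_X, MvPolynomial.aeval_X]
  norm_num
  rw [qt_pow, qt_pow, qt_mul]
  norm_num

lemma Pos_qt' {p r : ℤ} (hp : 0 ≤ p) (hr : 0 ≤ r) : Pos (qt p r) := by
  obtain ⟨p, rfl⟩ := Int.eq_ofNat_of_zero_le hp
  obtain ⟨r, rfl⟩ := Int.eq_ofNat_of_zero_le hr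
  exact Pos_qt p r

lemma Pos_sum {ι : Type*} (s : Finset ι) (f : ι → K2) (h : ∀ i ∈ s, Pos (f i)) :
    Pos (∑ i ∈ s, f i) :=
  Finset.sum_induction f Pos (fun _ _ ha hb => ha.add hb) Pos_zero h

/- ### list elementary symmetric functions -/

section eLsec
variable {K : Type*} [CommRing K]

/-- list version of elementary symmetric functions, via coefficients of `∏ (C v * X + 1)` -/
noncomputable def eL (L : List K) (k : ℕ) : K :=
  ((L.map (fun v => Polynomial.C v * Polynomial.X + 1)).prod).coeff k

lemma eL_nil_succ (k : ℕ) : eL ([] : List K) (k + 1) = 0 := by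
  simp [eL, Polynomial.coeff_one]

lemma eL_snoc (L : List K) (v : K) (k : ℕ) :
    eL (L ++ [v]) (k + 1) = eL L (k + 1) + v * eL L k := by
  simp only [eL, List.map_append, List.prod_append, List.map_cons, List.map_nil,
    List.prod_cons, List.prod_nil, mul_one]
  set P := (List.map (fun v => Polynomial.C v * Polynomial.X + 1) L).prod with hP
  have h : (P * (Polynomial.C v * Polynomial.X)).coeff (k + 1) = v * P.coeff k := by
    rw [← mul_assoc, Polynomial.coeff_mul_X, Polynomial.coeff_mul_C]; ring
  rw [mul_add, mul_one, Polynomial.coeff_add, h]; ring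

lemma eL_snoc_zero (L : List K) (v : K) : eL (L ++ [v]) 0 = eL L 0 := by
  simp only [eL, List.map_append, List.prod_append, List.map_cons, List.map_nil,
    List.prod_cons, List.prod_nil, mul_one]
  rw [Polynomial.mul_coeff_zero]
  simp

lemma eL_zero (L : List K) : eL L 0 = 1 := by
  induction L using List.reverseRecOn with
  | nil => simp [eL]
  | append_singleton L v ih => rw [eL_snoc_zero, ih]

lemma coeff_prod_esym {ι : Type*} [DecidableEq ι] (s : Finset ι) (f : ι → K) (k : ℕ) :
    (∏ i ∈ s, (Polynomial.C (f i) * Polynomial.X + 1)).coeff k = esym s f k := by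
  rw [Finset.prod_add]
  simp only [Finset.prod_const_one, mul_one]
  have : ∀ t : Finset ι, (∏ i ∈ t, (Polynomial.C (f i) * Polynomial.X)) =
      Polynomial.C (∏ i ∈ t, f i) * Polynomial.X ^ t.card := by
    intro t
    rw [Finset.prod_mul_distrib, Finset.prod_const, map_prod]
  simp only [this, Polynomial.finset_sum_coeff, Polynomial.coeff_C_mul, Polynomial.coeff_X_pow]
  rw [esym, Finset.powersetCard_eq_filter, Finset.sum_filter]
  apply Finset.sum_congr rfl
  intro t _
  rcases eq_or_ne t.card k with h | h
  · simp [h]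
  · rw [if_neg (Ne.symm h), if_neg h, mul_zero]

lemma esym_eq_eL {n : ℕ} (f : Fin n → K) (k : ℕ) :
    esym Finset.univ f k = eL (List.ofFn f) k := by
  rw [← coeff_prod_esym, eL, List.map_ofFn, List.prod_ofFn]
  rfl

end eLsec

/- ### the sequences of corner weights -/

def seqL (f : ℕ → K2) : ℕ → List K2
  | 0 => []
  | n + 1 => seqL f n ++ [f n]

lemma seqL_eq_ofFn (f : ℕ → K2) : ∀ n, seqL f n = List.ofFn (fun i : Fin n => f i)
  | 0 => by simp [seqL]
  | n + 1 => by
      rw [seqL, seqL_eq_ofFn f n, List.ofFn_succ', List.concat_eq_append]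
      simp [Fin.coe_castSucc, Fin.val_last]

/-- the outer corner weights `x_0, x_1, …` -/
noncomputable def Xs (l a : ℕ → ℕ) (j : ℕ) : K2 :=
  if j = 0 then qt (-1) (-1) else qt (a (j - 1)) (l (j - 1))

/-- the inner corner weights `u_0, u_1, …` (except the last one) -/
noncomputable def Vs (l a : ℕ → ℕ) (j : ℕ) : K2 :=
  if j = 0 then qt (-1) (l 0) else qt (a (j - 1)) (l j)

/-- `Dn n (k+1)` is `e_{k+1}(x_0,…,x_n) - e_{k+1}(u_0,…,u_n)` for `n` corners;
`Dn n 0 = 0`. -/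
noncomputable def Dn (l a : ℕ → ℕ) (n : ℕ) : ℕ → K2
  | 0 => 0
  | k + 1 =>
      eL (seqL (Xs l a) (n + 1)) (k + 1) - eL (seqL (Vs l a) n) (k + 1) -
        qt (a (n - 1)) (-1) * eL (seqL (Vs l a) n) k

/- ### geometric sums -/

/-- `1 + t + ... + t^L` -/
noncomputable def tg (L : ℕ) : K2 := ∑ j ∈ Finset.range (L + 1), qt 0 j

/-- `q^{c+1} + ... + q^{c+d}` -/
noncomputable def qg (c : ℤ) (d : ℕ) : K2 := ∑ j ∈ Finset.range d, qt (c + 1 + j) 0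

lemma tg_mul (L : ℕ) : (1 - qt 0 (-1)) * tg L = qt 0 L - qt 0 (-1) := by
  induction L with
  | zero =>
      rw [tg, Finset.sum_range_one, Nat.cast_zero, qt_zero_zero, mul_one]
  | succ n ih =>
      rw [tg, Finset.sum_range_succ, mul_add, ← tg, ih, sub_mul, one_mul, qt_mul]
      push_cast
      ring_nf

lemma qg_mul (c : ℤ) (d : ℕ) : (1 - qt (-1) 0) * qg c d = qt (c + d) 0 - qt c 0 := by
  induction d with
  | zero => simp [qg]
  | succ n ih =>
      rw [qg, Finset.sum_range_succ, mul_add, ← qg, ih, sub_mul, one_mul, qt_mul]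
      push_cast
      ring_nf

lemma Pos_tg (L : ℕ) : Pos (tg L) :=
  Pos_sum _ _ (fun j _ => Pos_qt' (le_refl 0) (Int.ofNat_nonneg j))

lemma Pos_qg_neg_one (d : ℕ) : Pos (qg (-1) d) :=
  Pos_sum _ _ (fun j _ => Pos_qt' (by omega) (le_refl 0))

lemma qg_factor (c : ℕ) (d : ℕ) : qg (c : ℤ) d = qt ((c : ℤ) + 1) 0 * qg (-1) d := by
  rw [qg, qg, Finset.mul_sum]
  apply Finset.sum_congr rfl
  intro j _
  rw [qt_mul]
  congr 1 <;> ring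

/- ### positivity of `q^{c+1} e_k(u_0,…,u_{n-1})` -/

lemma posV (l a : ℕ → ℕ) (c : ℕ) :
    ∀ n k, Pos (qt ((c : ℤ) + 1) 0 * eL (seqL (Vs l a) n) k) := by
  intro n
  induction n with
  | zero =>
      intro k
      cases k with
      | zero => rw [eL_zero, mul_one]; exact Pos_qt' (by omega) le_rfl
      | succ k => rw [show seqL (Vs l a) 0 = [] from rfl, eL_nil_succ, mul_zero]; exact Pos_zero
  | succ n ih =>
      intro k
      cases k with
      | zero => rw [eL_zero, mul_one]; exact Pos_qt' (by omega) le_rfl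
      | succ k =>
          rw [show seqL (Vs l a) (n + 1) = seqL (Vs l a) n ++ [Vs l a n] from rfl,
            eL_snoc, mul_add]
          refine (ih (k + 1)).add ?_
          cases n with
          | zero =>
              cases k with
              | zero =>
                  rw [eL_zero, mul_one, show Vs l a 0 = qt (-1) (l 0) from rfl, qt_mul]
                  exact Pos_qt' (by omega) (by omega)
              | succ k =>
                  rw [show seqL (Vs l a) 0 = [] from rfl, eL_nil_succ, mul_zero, mul_zero]
                  exact Pos_zero
          | succ n =>
              have hv : Vs l a (n + 1) = qt (a n) (l (n + 1)) := by simp [Vs]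
              rw [show qt ((c : ℤ) + 1) 0 * (Vs l a (n + 1) * eL (seqL (Vs l a) (n + 1)) k) =
                Vs l a (n + 1) * (qt ((c : ℤ) + 1) 0 * eL (seqL (Vs l a) (n + 1)) k) by ring, hv]
              exact (Pos_qt' (Int.ofNat_nonneg _) (Int.ofNat_nonneg _)).mul (ih k)

/- ### the key recursion -/

lemma step_lemma (l a : ℕ → ℕ) (j : ℕ) (hale : a j ≤ a (j + 1)) (k : ℕ) :
    Dn l a (j + 2) (k + 1) =
      Dn l a (j + 1) (k + 1) + qt (a (j + 1)) (l (j + 1)) * Dn l a (j + 1) k +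
        (1 - qt 0 (-1)) * (1 - qt (-1) 0) *
          (tg (l (j + 1)) * qg (a j) (a (j + 1) - a j) * eL (seqL (Vs l a) (j + 1)) k) := by
  have hM : (1 - qt 0 (-1)) * (1 - qt (-1) 0) * (tg (l (j + 1)) * qg (a j) (a (j + 1) - a j)) =
      qt (a (j + 1)) (l (j + 1)) - qt (a j) (l (j + 1)) - qt (a (j + 1)) (-1) + qt (a j) (-1) := by
    have h1 := tg_mul (l (j + 1))
    have h2 := qg_mul (a j) (a (j + 1) - a j)
    have hc : ((a j : ℤ) + (a (j + 1) - a j : ℕ)) = (a (j + 1) : ℤ) := by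
      push_cast [Nat.cast_sub hale]; ring
    rw [hc] at h2
    calc (1 - qt 0 (-1)) * (1 - qt (-1) 0) * (tg (l (j + 1)) * qg (a j) (a (j + 1) - a j))
        = ((1 - qt 0 (-1)) * tg (l (j + 1))) * ((1 - qt (-1) 0) * qg (a j) (a (j + 1) - a j)) := by
          ring
      _ = (qt 0 (l (j + 1)) - qt 0 (-1)) * (qt (a (j + 1)) 0 - qt (a j) 0) := by rw [h1, h2]
      _ = _ := by
          rw [sub_mul, mul_sub, mul_sub, qt_mul, qt_mul, qt_mul, qt_mul]
          simp only [zero_add, add_zero]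
          ring
  have hswap : qt (a (j + 1)) (l (j + 1)) * qt (a j) (-1) =
      qt (a (j + 1)) (-1) * qt (a j) (l (j + 1)) := by
    rw [qt_mul, qt_mul]; congr 1 <;> ring
  have hX : Xs l a (j + 2) = qt (a (j + 1)) (l (j + 1)) := by simp [Xs]
  have hV : Vs l a (j + 1) = qt (a j) (l (j + 1)) := by simp [Vs]
  have hsX : seqL (Xs l a) (j + 3) = seqL (Xs l a) (j + 2) ++ [Xs l a (j + 2)] := rfl
  have hsV : seqL (Vs l a) (j + 2) = seqL (Vs l a) (j + 1) ++ [Vs l a (j + 1)] := rfl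
  cases k with
  | zero =>
      simp only [Dn, hsX, hsV, eL_snoc, eL_zero, hX, hV]
      simp only [show (j + 2 - 1 : ℕ) = j + 1 from rfl, show (j + 1 - 1 : ℕ) = j from rfl]
      linear_combination -hM
  | succ k =>
      simp only [Dn, hsX, hsV, eL_snoc, hX, hV]
      simp only [show (j + 2 - 1 : ℕ) = j + 1 from rfl, show (j + 1 - 1 : ℕ) = j from rfl]
      linear_combination (-(eL (seqL (Vs l a) (j + 1)) (k + 1))) * hM +
        eL (seqL (Vs l a) (j + 1)) k * hswap

/- ### base case `n = 1` -/

lemma base_lemma (l a : ℕ → ℕ) (k : ℕ) :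
    ∃ B : MvPolynomial (Fin 2) ℕ,
      Dn l a 1 k = (1 - qt 0 (-1)) * (1 - qt (-1) 0) * phi B := by
  have hs1 : seqL (Xs l a) 1 = [] ++ [Xs l a 0] := rfl
  have hs2 : seqL (Xs l a) 2 = seqL (Xs l a) 1 ++ [Xs l a 1] := rfl
  have hv1 : seqL (Vs l a) 1 = [] ++ [Vs l a 0] := rfl
  have hX0 : Xs l a 0 = qt (-1) (-1) := rfl
  have hX1 : Xs l a 1 = qt (a 0) (l 0) := rfl
  have hV0 : Vs l a 0 = qt (-1) (l 0) := rfl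
  match k with
  | 0 => exact ⟨0, by simp [Dn, phi]⟩
  | 1 =>
      obtain ⟨B, hB⟩ := (Pos_tg (l 0)).mul (Pos_qg_neg_one (a 0 + 1))
      refine ⟨B, ?_⟩
      have hM : (1 - qt 0 (-1)) * (1 - qt (-1) 0) * (tg (l 0) * qg (-1) (a 0 + 1)) =
          qt (a 0) (l 0) - qt (-1) (l 0) - qt (a 0) (-1) + qt (-1) (-1) := by
        have h1 := tg_mul (l 0)
        have h2 := qg_mul (-1) (a 0 + 1)
        have hc : ((-1 : ℤ) + ((a 0 + 1 : ℕ) : ℤ)) = (a 0 : ℤ) := by push_cast; ring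
        rw [hc] at h2
        calc (1 - qt 0 (-1)) * (1 - qt (-1) 0) * (tg (l 0) * qg (-1) (a 0 + 1))
            = ((1 - qt 0 (-1)) * tg (l 0)) * ((1 - qt (-1) 0) * qg (-1) (a 0 + 1)) := by ring
          _ = (qt 0 (l 0) - qt 0 (-1)) * (qt (a 0) 0 - qt (-1) 0) := by rw [h1, h2]
          _ = _ := by
              rw [sub_mul, mul_sub, mul_sub, qt_mul, qt_mul, qt_mul, qt_mul]
              simp only [zero_add, add_zero]
              ring
      simp only [Dn, hs2, hs1, hv1, eL_snoc, eL_zero, eL_nil_succ, hX0, hX1, hV0,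
        show (1 : ℕ) - 1 = 0 from rfl]
      rw [← hB]
      linear_combination -hM
  | 2 =>
      refine ⟨0, ?_⟩
      have hprod : Xs l a 1 * Xs l a 0 = qt (a 0) (-1) * Vs l a 0 := by
        rw [hX0, hX1, hV0, qt_mul, qt_mul]; congr 1 <;> ring
      simp only [Dn, hs2, hs1, hv1, eL_snoc, eL_zero, eL_nil_succ, phi, map_zero, mul_zero,
        show (1 : ℕ) - 1 = 0 from rfl]
      linear_combination hprod
  | (k + 3) =>
      refine ⟨0, ?_⟩
      simp only [Dn, hs2, hs1, hv1, eL_snoc, eL_nil_succ, phi, map_zero, mul_zero]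
      ring

/- ### main induction -/

lemma main_lemma (l a : ℕ → ℕ) (n : ℕ) (hn : 1 ≤ n)
    (ha : ∀ i j, i < j → j < n → a i < a j) :
    ∀ k, ∃ B : MvPolynomial (Fin 2) ℕ,
      Dn l a n k = (1 - qt 0 (-1)) * (1 - qt (-1) 0) * phi B := by
  induction n, hn using Nat.le_induction with
  | base => exact base_lemma l a
  | succ n hn ih =>
      intro k
      obtain ⟨j, rfl⟩ : ∃ j, n = j + 1 := ⟨n - 1, by omega⟩
      cases k with
      | zero => exact ⟨0, by simp [Dn, phi]⟩
      | succ k =>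
          have ha' : ∀ i j', i < j' → j' < j + 1 → a i < a j' := fun i j' h1 h2 =>
            ha i j' h1 (by omega)
          obtain ⟨B1, hB1⟩ := ih ha' (k + 1)
          obtain ⟨B2, hB2⟩ := ih ha' k
          have hale : a j ≤ a (j + 1) := le_of_lt (ha j (j + 1) (by omega) (by omega))
          -- positivity of the extra term
          have hpos : Pos (tg (l (j + 1)) * qg (a j) (a (j + 1) - a j) *
              eL (seqL (Vs l a) (j + 1)) k) := by
            rw [qg_factor]
            rw [show tg (l (j + 1)) * (qt ((a j : ℤ) + 1) 0 * qg (-1) (a (j + 1) - a j)) *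
                eL (seqL (Vs l a) (j + 1)) k =
                tg (l (j + 1)) * (qg (-1) (a (j + 1) - a j) *
                  (qt ((a j : ℤ) + 1) 0 * eL (seqL (Vs l a) (j + 1)) k)) by ring]
            exact (Pos_tg _).mul ((Pos_qg_neg_one _).mul (posV l a (a j) (j + 1) k))
          obtain ⟨B3, hB3⟩ := hpos
          obtain ⟨B4, hB4⟩ := Pos_qt (a (j + 1)) (l (j + 1))
          refine ⟨B1 + B4 * B2 + B3, ?_⟩
          rw [step_lemma l a j hale k, hB1, hB2, hB3, phi_add, phi_add, phi_mul, ← hB4]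
          ring

/- ### glue: the original statement -/

/-- Theorem 3.4 of Bergeron–Garsia: with `x_0 = 1/(tq)`, `x_i = t^{l_i} q^{a_i}`
(the outer corner weights, `l` strictly decreasing, `a` strictly increasing,
both 0-indexed here), `u_0 = t^{l_1}/q`, `u_i = t^{l_{i+1}} q^{a_i}`,
`u_m = q^{a_m}/t` (the inner corner weights), for each `1 ≤ k ≤ m` the
expression `(e_k(x_0,…,x_m) - e_k(u_0,…,u_m)) / ((1 - 1/t)(1 - 1/q))`
is a polynomial in `q, t` with nonnegative integer coefficients. -/
theorem statement18 (m : ℕ) (hm : 1 ≤ m) (l a : ℕ → ℕ)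
    (hl : ∀ i j, i < j → j < m → l j < l i)
    (ha : ∀ i j, i < j → j < m → a i < a j) :
    ∀ k, 1 ≤ k → k ≤ m →
      ∃ B : MvPolynomial (Fin 2) ℕ,
        esym Finset.univ
            (fun j : Fin (m + 1) =>
              if (j : ℕ) = 0 then qt (-1) (-1)
              else qt (a ((j : ℕ) - 1)) (l ((j : ℕ) - 1))) k -
          esym Finset.univ
            (fun j : Fin (m + 1) =>
              if (j : ℕ) = 0 then qt (-1) (l 0)
              else if (j : ℕ) = m then qt (a (m - 1)) (-1)
              else qt (a ((j : ℕ) - 1)) (l (j : ℕ))) k =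
        (1 - qt 0 (-1)) * (1 - qt (-1) 0) *
          MvPolynomial.aeval (fun i : Fin 2 => if i = 0 then qt 1 0 else qt 0 1)
            (B.map (Nat.castRingHom ℤ)) := by
  intro k hk1 _
  obtain ⟨k, rfl⟩ : ∃ k', k = k' + 1 := ⟨k - 1, by omega⟩
  -- identify the x list
  have hXlist : List.ofFn (fun j : Fin (m + 1) =>
      if (j : ℕ) = 0 then qt (-1) (-1)
      else qt (a ((j : ℕ) - 1)) (l ((j : ℕ) - 1))) = seqL (Xs l a) (m + 1) := by
    rw [seqL_eq_ofFn]
    rfl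
  -- identify the u list
  have hUlist : List.ofFn (fun j : Fin (m + 1) =>
      if (j : ℕ) = 0 then qt (-1) (l 0)
      else if (j : ℕ) = m then qt (a (m - 1)) (-1)
      else qt (a ((j : ℕ) - 1)) (l (j : ℕ))) =
      seqL (Vs l a) m ++ [qt (a (m - 1)) (-1)] := by
    rw [List.ofFn_succ', List.concat_eq_append, seqL_eq_ofFn]
    congr 1
    · apply congrArg
      funext i
      have hi : (i : ℕ) < m := i.isLt
      have him : (i : ℕ) ≠ m := by omega
      simp only [Fin.coe_castSucc, him, if_false, Vs]
    · simp only [Fin.val_last]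
      have : m ≠ 0 := by omega
      simp [this]
  obtain ⟨B, hB⟩ := main_lemma l a m hm ha (k + 1)
  refine ⟨B, ?_⟩
  rw [esym_eq_eL, esym_eq_eL, hXlist, hUlist, eL_snoc]
  have : eL (seqL (Xs l a) (m + 1)) (k + 1) -
      (eL (seqL (Vs l a) m) (k + 1) + qt (a (m - 1)) (-1) * eL (seqL (Vs l a) m) k) =
      Dn l a m (k + 1) := by
    simp only [Dn]; ring
  rw [this, hB]
  rfl
end

section
/- Let K be a field, m ≥ 1, let x_0, x_1, …, x_m and u_0, u_1, …, u_m be nonzero elements of K with ∏_{s=0}^{m} x_s = ∏_{s=0}^{m} u_s, and let z ∈ K satisfy z ≠ 0 and 1 − x_j·z ≠ 0 for 1 ≤ j ≤ m. For 1 ≤ i ≤ m set G_i := ∏_{j=1}^{i} (x_j/u_{j−1})·(1 − u_{j−1}·z)/(1 − x_j·z). Then Σ_{i=1}^{m} ( ∏_{j=i+1}^{m} x_j/u_j )·(1 − x_i/u_i)·(1 − G_i) = (x_0·z)^{-1}·( ∏_{s=0}^{m}(1 − u_s·z) / ∏_{s=1}^{m}(1 − x_s·z) − (1 − x_0·z)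 ). -/
/-!
Let `A i = ∏_{j > i} x_j / u_j`, `P i = ∏_{s ≤ i} (1 - u_s z)` and
`Q i = ∏_{1 ≤ s ≤ i} (1 - x_s z)`. The constraint `∏ x = ∏ u` collapses `A i · G i` to
`(u_i / x_0) · P (i-1) / Q i`, and with this the `i`-th summand becomes `F i - F (i-1)` for
`F i = A i + (x_0 z)⁻¹ · P i / Q i`. The sum telescopes to `F m - F 0`, and `A 0 = u_0 / x_0`
turns this into the right-hand side.
-/

open Finset

theorem Finset.sum_Icc_one_sub_pred {M : Type*} [AddCommGroup M] (f : ℕ → M) (m : ℕ) :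
    ∑ i ∈ Icc 1 m, (f i - f (i - 1)) = f m - f 0 := by
  induction m with
  | zero => simp
  | succ m ih =>
    rw [sum_Icc_succ_top (by omega), ih, Nat.add_sub_cancel]
    abel

theorem Finset.prod_range_succ_eq_mul_prod_Icc {M : Type*} [CommMonoid M] (f : ℕ → M)
    {i m : ℕ} (h : i ≤ m) :
    ∏ j ∈ range (m + 1), f j =
      (∏ j ∈ range (i + 1), f j) * ∏ j ∈ Icc (i + 1) m, f j := by
  rw [← Ico_add_one_right_eq_Icc, prod_range_mul_prod_Ico f (by omega)]

theorem Finset.prod_range_succ_eq_mul_prod_Icc_one {M : Type*} [CommMonoid M] (f : ℕ → M)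
    (i : ℕ) : ∏ j ∈ range (i + 1), f j = f 0 * ∏ j ∈ Icc 1 i, f j := by
  rw [prod_range_succ_eq_mul_prod_Icc f (Nat.zero_le i), prod_range_one]

theorem Finset.prod_Icc_one_pred {M : Type*} [CommMonoid M] (f : ℕ → M) (i : ℕ) :
    ∏ j ∈ Icc 1 i, f (j - 1) = ∏ j ∈ range i, f j := by
  induction i with
  | zero => simp
  | succ i ih => rw [prod_Icc_succ_top (by omega), ih, prod_range_succ, Nat.add_sub_cancel]

theorem Finset.prod_Icc_eq_mul_prod_Icc_succ {M : Type*} [CommMonoid M] (f : ℕ → M)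
    {i m : ℕ} (h : i ≤ m) :
    ∏ j ∈ Icc i m, f j = f i * ∏ j ∈ Icc (i + 1) m, f j := by
  rw [← Ico_add_one_right_eq_Icc, ← Ico_add_one_right_eq_Icc,
    prod_eq_prod_Ico_succ_bot (by omega)]

section

variable {K : Type*} [Field K] {m : ℕ} {x u : ℕ → K}

theorem prod_Icc_div_mul_eq_of_prod_eq
    (hprod : ∏ s ∈ range (m + 1), x s = ∏ s ∈ range (m + 1), u s)
    (hx : x 0 ≠ 0) (hu : ∀ s, s ≤ m → u s ≠ 0) {i : ℕ} (hi : i ≤ m) :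
    (∏ j ∈ Icc (i + 1) m, x j / u j) * ((∏ j ∈ Icc 1 i, x j) / ∏ j ∈ range i, u j) =
      u i / x 0 := by
  have hU : ∏ j ∈ range i, u j ≠ 0 :=
    prod_ne_zero_iff.2 fun j hj => hu j (by rw [mem_range] at hj; omega)
  have hU' : ∏ j ∈ Icc (i + 1) m, u j ≠ 0 :=
    prod_ne_zero_iff.2 fun j hj => hu j (mem_Icc.1 hj).2
  rw [prod_range_succ_eq_mul_prod_Icc x hi, prod_range_succ_eq_mul_prod_Icc u hi,
    prod_range_succ_eq_mul_prod_Icc_one, prod_range_succ] at hprod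
  rw [prod_div_distrib, div_mul_div_comm, div_eq_div_iff (mul_ne_zero hU' hU) hx]
  linear_combination hprod

variable (m x u) in
def telescopingPrimitive (z : K) (i : ℕ) : K :=
  ∏ j ∈ Icc (i + 1) m, x j / u j +
    (x 0 * z)⁻¹ * ((∏ s ∈ range (i + 1), (1 - u s * z)) / ∏ s ∈ Icc 1 i, (1 - x s * z))

theorem telescoping_step_of_mul_eq {A W P Q a b x₀ z : K} (hAW : A * W = b / x₀)
    (hb : b ≠ 0) (hc : 1 - a * z ≠ 0) (hx : x₀ ≠ 0) (hz : z ≠ 0) (hQ : Q ≠ 0) :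
    A * (1 - a / b) * (1 - W * (P / (Q * (1 - a * z)))) =
      A + (x₀ * z)⁻¹ * (P * (1 - b * z) / (Q * (1 - a * z))) -
        (a / b * A + (x₀ * z)⁻¹ * (P / Q)) := by
  calc _ = A * (1 - a / b) - (1 - a / b) * (b / x₀) * (P / (Q * (1 - a * z))) := by
        rw [← hAW]
        ring
    _ = _ := by
      field_simp
      ring

theorem summand_eq_telescopingPrimitive_sub
    (hprod : ∏ s ∈ range (m + 1), x s = ∏ s ∈ range (m + 1), u s)
    (hx : x 0 ≠ 0) (hu : ∀ s, s ≤ m → u s ≠ 0) {z : K} (hz : z ≠ 0)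
    (hxz : ∀ j, 1 ≤ j → j ≤ m → 1 - x j * z ≠ 0) {i : ℕ} (hi : i ∈ Icc 1 m) :
    (∏ j ∈ Icc (i + 1) m, x j / u j) * (1 - x i / u i) *
        (1 - ∏ j ∈ Icc 1 i, (x j / u (j - 1)) * ((1 - u (j - 1) * z) / (1 - x j * z))) =
      telescopingPrimitive m x u z i - telescopingPrimitive m x u z (i - 1) := by
  obtain ⟨hi1, him⟩ := mem_Icc.1 hi
  obtain ⟨k, rfl⟩ : ∃ k, i = k + 1 := ⟨i - 1, by omega⟩
  have hQ : ∏ s ∈ Icc 1 k, (1 - x s * z) ≠ 0 :=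
    prod_ne_zero_iff.2 fun j hj => hxz j (mem_Icc.1 hj).1 (by grind)
  have hQsucc : ∏ s ∈ Icc 1 (k + 1), (1 - x s * z) =
      (∏ s ∈ Icc 1 k, (1 - x s * z)) * (1 - x (k + 1) * z) :=
    prod_Icc_succ_top (by omega) _
  rw [prod_mul_distrib, prod_div_distrib (s := Icc 1 (k + 1)),
    prod_div_distrib (s := Icc 1 (k + 1)), prod_Icc_one_pred u,
    prod_Icc_one_pred (fun s => 1 - u s * z), telescopingPrimitive, telescopingPrimitive,
    Nat.add_sub_cancel, prod_Icc_eq_mul_prod_Icc_succ _ him, hQsucc, prod_range_succ _ (k + 1)]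
  exact telescoping_step_of_mul_eq (prod_Icc_div_mul_eq_of_prod_eq hprod hx hu him)
    (hu _ him) (hxz _ hi1 him) hx hz hQ

end

theorem statement19_general {K : Type*} [Field K] (m : ℕ)
    (x u : ℕ → K)
    (hx0 : ∀ s, s ≤ m → x s ≠ 0) (hu0 : ∀ s, s ≤ m → u s ≠ 0)
    (hprod : ∏ s ∈ Finset.range (m + 1), x s = ∏ s ∈ Finset.range (m + 1), u s)
    (z : K) (hz : z ≠ 0) (hxz : ∀ j, 1 ≤ j → j ≤ m → 1 - x j * z ≠ 0) :
    ∑ i ∈ Finset.Icc 1 m,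
        (∏ j ∈ Finset.Icc (i + 1) m, x j / u j) * (1 - x i / u i) *
          (1 - ∏ j ∈ Finset.Icc 1 i,
            (x j / u (j - 1)) * ((1 - u (j - 1) * z) / (1 - x j * z))) =
      (x 0 * z)⁻¹ *
        ((∏ s ∈ Finset.range (m + 1), (1 - u s * z)) /
            (∏ s ∈ Finset.Icc 1 m, (1 - x s * z)) -
          (1 - x 0 * z)) := by
  have hx : x 0 ≠ 0 := hx0 0 m.zero_le
  rw [sum_congr rfl fun i hi => summand_eq_telescopingPrimitive_sub hprod hx hu0 hz hxz hi,
    sum_Icc_one_sub_pred]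
  have hA₀ := prod_Icc_div_mul_eq_of_prod_eq hprod hx hu0 m.zero_le
  simp only [Icc_eq_empty_of_lt (Nat.lt_succ_self _), prod_empty, prod_range_zero, div_one,
    mul_one] at hA₀
  simp only [telescopingPrimitive, hA₀, Icc_eq_empty_of_lt (Nat.lt_succ_self _), prod_empty,
    prod_range_one, div_one, zero_add]
  field_simp
  ring

/-- The telescoping identity behind the Bergeron–Haiman algorithm computation
(formulas 4.27–4.30 of Bergeron–Garsia): with
`G_i = ∏_{j=1}^i (x_j/u_{j-1}) (1 - u_{j-1} z)/(1 - x_j z)`,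
`∑_{i=1}^m (∏_{j=i+1}^m x_j/u_j)(1 - x_i/u_i)(1 - G_i)
  = (x_0 z)⁻¹ ( ∏_{s=0}^m (1 - u_s z) / ∏_{s=1}^m (1 - x_s z) - (1 - x_0 z) )`.
Here `x, u : ℕ → K`, with only the values at `0, 1, …, m` relevant. -/
theorem statement19 {K : Type*} [Field K] (m : ℕ) (hm : 1 ≤ m)
    (x u : ℕ → K)
    (hx0 : ∀ s, s ≤ m → x s ≠ 0) (hu0 : ∀ s, s ≤ m → u s ≠ 0)
    (hprod : ∏ s ∈ Finset.range (m + 1), x s = ∏ s ∈ Finset.range (m + 1), u s)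
    (z : K) (hz : z ≠ 0) (hxz : ∀ j, 1 ≤ j → j ≤ m → 1 - x j * z ≠ 0) :
    ∑ i ∈ Finset.Icc 1 m,
        (∏ j ∈ Finset.Icc (i + 1) m, x j / u j) * (1 - x i / u i) *
          (1 - ∏ j ∈ Finset.Icc 1 i,
            (x j / u (j - 1)) * ((1 - u (j - 1) * z) / (1 - x j * z))) =
      (x 0 * z)⁻¹ *
        ((∏ s ∈ Finset.range (m + 1), (1 - u s * z)) /
            (∏ s ∈ Finset.Icc 1 m, (1 - x s * z)) -
          (1 - x 0 * z)) :=
  statement19_general m x u hx0 hu0 hprod z hz hxz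
end
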